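/- arXiv:2109.06336 — 5 statements merged into one kernel-verified Lean document; each statement's English description precedes it below -/
import Mathlib

section
/- Let f : ℝ^d → [0,∞) be measurable with f(x) = η(x/|x|)·|x|^{-β} for x ≠ 0 (where β > d and η : S^{d-1} → [c₁, c₂] with 0 < c₁ ≤ c₂ < ∞). Then for every r > 1 and every x with |x| ≥ 1, the integral ∫_{|x-y|>r, |y|>r} f(x-y)f(y)/f(x) dy is bounded by 2^{1+β}(c₂²/c₁)∫_{|y|>r} |y|^{-β} dy; in particular sup_{|x|≥1} of this integral tends to 0 as r → ∞. -/
/-!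
For `z ≠ 0` the density is comparable to `‖z‖ ^ (-β)`. Since `‖x‖ ≤ ‖x - y‖ + ‖y‖`, one of
`‖x - y‖`, `‖y‖` is at least `‖x‖ / 2`, so its factor in `f (x - y) * f y` cancels `f x` up to
`2 ^ β * c₂ / c₁`, leaving `c₂ * ‖y‖ ^ (-β)` or `c₂ * ‖x - y‖ ^ (-β)`. Integrating both over the
region, and turning the `‖x - y‖` term into the `‖y‖` term by the substitution `y ↦ x - y`, gives
the bound by twice the tail integral of `‖y‖ ^ (-β)`, which is finite because `β > d`, hence tends
to `0`.
-/

open Filter MeasureTheory Set Topology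
open scoped ENNReal

lemma rpow_neg_mul_rpow_neg_mul_rpow_le_of_le_two_mul {a b c β : ℝ} (hβ : 0 ≤ β) (ha : 0 ≤ a)
    (hb : 0 < b) (hc : 0 ≤ c) (hcb : c ≤ 2 * b) :
    a ^ (-β) * b ^ (-β) * c ^ β ≤ 2 ^ β * a ^ (-β) := by
  have hquot : b ^ (-β) * c ^ β ≤ 2 ^ β := by
    rw [Real.rpow_neg hb.le, inv_mul_eq_div, ← Real.div_rpow hc hb.le]
    exact Real.rpow_le_rpow (div_nonneg hc hb.le) ((div_le_iff₀ hb).2 hcb) hβ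
  calc a ^ (-β) * b ^ (-β) * c ^ β = a ^ (-β) * (b ^ (-β) * c ^ β) := mul_assoc _ _ _
    _ ≤ a ^ (-β) * 2 ^ β := mul_le_mul_of_nonneg_left hquot (Real.rpow_nonneg ha _)
    _ = 2 ^ β * a ^ (-β) := mul_comm _ _

/-- The larger of `a` and `b` is at least `c / 2`, and its factor absorbs `c ^ β`. -/
lemma rpow_neg_mul_rpow_neg_mul_rpow_le {a b c β : ℝ} (hβ : 0 ≤ β) (ha : 0 < a) (hb : 0 < b)
    (hc : 0 ≤ c) (habc : c ≤ a + b) :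
    a ^ (-β) * b ^ (-β) * c ^ β ≤ 2 ^ β * (a ^ (-β) + b ^ (-β)) := by
  have h2β : (0 : ℝ) ≤ 2 ^ β := by positivity
  rcases le_total a b with hab | hba
  · calc a ^ (-β) * b ^ (-β) * c ^ β ≤ 2 ^ β * a ^ (-β) :=
          rpow_neg_mul_rpow_neg_mul_rpow_le_of_le_two_mul hβ ha.le hb hc (by linarith)
      _ ≤ 2 ^ β * (a ^ (-β) + b ^ (-β)) := by gcongr; exact le_add_of_nonneg_right (by positivity)
  · calc a ^ (-β) * b ^ (-β) * c ^ β = b ^ (-β) * a ^ (-β) * c ^ β := by rw [mul_comm (a ^ (-β))]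
      _ ≤ 2 ^ β * b ^ (-β) :=
          rpow_neg_mul_rpow_neg_mul_rpow_le_of_le_two_mul hβ hb.le ha hc (by linarith)
      _ ≤ 2 ^ β * (a ^ (-β) + b ^ (-β)) := by gcongr; exact le_add_of_nonneg_left (by positivity)

lemma mem_Icc_mul_norm_rpow_neg_of_eq {E : Type*} [NormedAddCommGroup E] [NormedSpace ℝ E]
    {η f : E → ℝ} {β c₁ c₂ : ℝ} (hη : ∀ x : E, ‖x‖ = 1 → η x ∈ Icc c₁ c₂)
    (hf : ∀ x : E, x ≠ 0 → f x = η ((1 / ‖x‖) • x) * ‖x‖ ^ (-β)) {z : E} (hz : z ≠ 0) :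
    f z ∈ Icc (c₁ * ‖z‖ ^ (-β)) (c₂ * ‖z‖ ^ (-β)) := by
  have hη_z := hη _ (norm_smul_inv_norm (𝕜 := ℝ) hz)
  rw [hf z hz, one_div]
  exact ⟨by gcongr; exact hη_z.1, by gcongr; exact hη_z.2⟩

section NormedGroup

variable {E : Type*} [NormedAddCommGroup E] {f : E → ℝ} {β c₁ c₂ : ℝ}

lemma apply_sub_mul_apply_div_apply_le (hβ : 0 ≤ β) (hc₁ : 0 < c₁)
    (hf : ∀ z : E, z ≠ 0 → f z ∈ Icc (c₁ * ‖z‖ ^ (-β)) (c₂ * ‖z‖ ^ (-β)))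
    {x y : E} (hx : x ≠ 0) (hy : y ≠ 0) (hxy : x - y ≠ 0) :
    f (x - y) * f y / f x ≤ 2 ^ β * (c₂ ^ 2 / c₁) * (‖x - y‖ ^ (-β) + ‖y‖ ^ (-β)) := by
  have ha := norm_pos_iff.2 hxy
  have hb := norm_pos_iff.2 hy
  have hc := norm_pos_iff.2 hx
  have hf_nonneg : ∀ z : E, z ≠ 0 → 0 ≤ f z := fun z hz =>
    le_trans (by have := norm_pos_iff.2 hz; positivity) (hf z hz).1
  have habc : ‖x‖ ≤ ‖x - y‖ + ‖y‖ := by linarith [norm_sub_norm_le x y]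
  have hnum : f (x - y) * f y ≤ c₂ * ‖x - y‖ ^ (-β) * (c₂ * ‖y‖ ^ (-β)) :=
    mul_le_mul (hf _ hxy).2 (hf _ hy).2 (hf_nonneg y hy) ((hf_nonneg _ hxy).trans (hf _ hxy).2)
  calc f (x - y) * f y / f x
      ≤ c₂ * ‖x - y‖ ^ (-β) * (c₂ * ‖y‖ ^ (-β)) / (c₁ * ‖x‖ ^ (-β)) :=
        div_le_div₀ ((mul_nonneg (hf_nonneg _ hxy) (hf_nonneg y hy)).trans hnum) hnum
          (by positivity) (hf x hx).1
    _ = c₂ ^ 2 / c₁ * (‖x - y‖ ^ (-β) * ‖y‖ ^ (-β) * ‖x‖ ^ β) := by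
        rw [Real.rpow_neg hc.le]
        field_simp
    _ ≤ c₂ ^ 2 / c₁ * (2 ^ β * (‖x - y‖ ^ (-β) + ‖y‖ ^ (-β))) :=
        mul_le_mul_of_nonneg_left (rpow_neg_mul_rpow_neg_mul_rpow_le hβ ha hb hc.le habc)
          (by positivity)
    _ = 2 ^ β * (c₂ ^ 2 / c₁) * (‖x - y‖ ^ (-β) + ‖y‖ ^ (-β)) := by ring

variable [MeasurableSpace E] [BorelSpace E] {μ : Measure E}

lemma setLIntegral_norm_sub_gt [μ.IsAddLeftInvariant] [μ.IsNegInvariant] (g : E → ℝ≥0∞)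
    (x : E) (r : ℝ) :
    ∫⁻ y in {y | r < ‖x - y‖}, g (x - y) ∂μ = ∫⁻ y in {y | r < ‖y‖}, g y ∂μ := by
  have hs : MeasurableSet {y : E | r < ‖y‖} := measurableSet_lt measurable_const measurable_norm
  rw [← lintegral_indicator hs, ← lintegral_sub_left_eq_self ({y | r < ‖y‖}.indicator g) x,
    ← lintegral_indicator (measurableSet_lt measurable_const (by fun_prop))]
  exact lintegral_congr fun y => indicator_comp_right (s := {y : E | r < ‖y‖}) (g := g) (x - ·)

lemma setLIntegral_apply_sub_mul_apply_div_apply_le [μ.IsAddLeftInvariant] [μ.IsNegInvariant]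
    (hβ : 0 ≤ β) (hc₁ : 0 < c₁)
    (hf : ∀ z : E, z ≠ 0 → f z ∈ Icc (c₁ * ‖z‖ ^ (-β)) (c₂ * ‖z‖ ^ (-β)))
    {r : ℝ} (hr : 0 ≤ r) {x : E} (hx : x ≠ 0) :
    ∫⁻ y in {y | r < ‖x - y‖ ∧ r < ‖y‖}, ENNReal.ofReal (f (x - y) * f y / f x) ∂μ ≤
      ENNReal.ofReal (2 ^ (1 + β) * (c₂ ^ 2 / c₁)) *
        ∫⁻ y in {y | r < ‖y‖}, ENNReal.ofReal (‖y‖ ^ (-β)) ∂μ := by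
  set C : ℝ := 2 ^ β * (c₂ ^ 2 / c₁)
  set g : E → ℝ≥0∞ := fun y => ENNReal.ofReal (‖y‖ ^ (-β))
  set S := {y : E | r < ‖x - y‖ ∧ r < ‖y‖}
  set T := ∫⁻ y in {y | r < ‖y‖}, g y ∂μ
  have hg : Measurable g := by fun_prop
  have hpoint : ∀ y ∈ S, ENNReal.ofReal (f (x - y) * f y / f x) ≤
      ENNReal.ofReal C * (g (x - y) + g y) := by
    rintro y ⟨hxy, hy⟩
    rw [← ENNReal.ofReal_add (by positivity) (by positivity), ← ENNReal.ofReal_mul (by positivity)]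
    exact ENNReal.ofReal_le_ofReal <| apply_sub_mul_apply_div_apply_le hβ hc₁ hf hx
      (norm_pos_iff.1 (hr.trans_lt hy)) (norm_pos_iff.1 (hr.trans_lt hxy))
  have hfirst : ∫⁻ y in S, g (x - y) ∂μ ≤ T :=
    (lintegral_mono_set fun y hy => hy.1).trans (setLIntegral_norm_sub_gt g x r).le
  have hsecond : ∫⁻ y in S, g y ∂μ ≤ T := lintegral_mono_set fun y hy => hy.2
  calc ∫⁻ y in S, ENNReal.ofReal (f (x - y) * f y / f x) ∂μ
      ≤ ∫⁻ y in S, ENNReal.ofReal C * (g (x - y) + g y) ∂μ :=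
        setLIntegral_mono (by fun_prop) hpoint
    _ = ENNReal.ofReal C * (∫⁻ y in S, g (x - y) ∂μ + ∫⁻ y in S, g y ∂μ) := by
        rw [lintegral_const_mul _ (by fun_prop), lintegral_add_right _ hg]
    _ ≤ ENNReal.ofReal C * (T + T) := by gcongr
    _ = ENNReal.ofReal (2 ^ (1 + β) * (c₂ ^ 2 / c₁)) * T := by
        rw [Real.rpow_add two_pos, Real.rpow_one, mul_assoc, ENNReal.ofReal_mul zero_le_two,
          ENNReal.ofReal_ofNat]
        ring

lemma tendsto_setLIntegral_norm_gt_atTop {g : E → ℝ≥0∞} {r₀ : ℝ}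
    (h : ∫⁻ y in {y | r₀ < ‖y‖}, g y ∂μ ≠ ∞) :
    Tendsto (fun r : ℝ => ∫⁻ y in {y | r < ‖y‖}, g y ∂μ) atTop (𝓝 0) := by
  have hs : ∀ r : ℝ, MeasurableSet {y : E | r < ‖y‖} := fun r =>
    measurableSet_lt measurable_const measurable_norm
  have key := tendsto_measure_iInter_atTop (μ := μ.withDensity g)
    (fun r => (hs r).nullMeasurableSet) (fun r₁ r₂ h y hy => h.trans_lt hy)
    ⟨r₀, by rwa [withDensity_apply _ (hs r₀)]⟩
  rw [Set.iInter_eq_empty_iff.2 fun y => ⟨‖y‖, lt_irrefl ‖y‖⟩, measure_empty] at key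
  simpa only [Function.comp_def, withDensity_apply _ (hs _)] using key

end NormedGroup

section FiniteDimensional

variable {E : Type*} [NormedAddCommGroup E] [NormedSpace ℝ E] [FiniteDimensional ℝ E]
  [MeasurableSpace E] [BorelSpace E] {μ : Measure E} [μ.IsAddHaarMeasure] {β : ℝ}

lemma setLIntegral_norm_gt_one_rpow_neg_lt_top (hβ : (Module.finrank ℝ E : ℝ) < β) :
    ∫⁻ y in {y : E | 1 < ‖y‖}, ENNReal.ofReal (‖y‖ ^ (-β)) ∂μ < ∞ := by
  have hβ0 : 0 ≤ β := (Nat.cast_nonneg _).trans hβ.le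
  have hpoint : ∀ y ∈ {y : E | 1 < ‖y‖}, ENNReal.ofReal (‖y‖ ^ (-β)) ≤
      ENNReal.ofReal (2 ^ β) * ENNReal.ofReal ((1 + ‖y‖) ^ (-β)) := by
    intro y hy
    rw [← ENNReal.ofReal_mul (by positivity)]
    refine ENNReal.ofReal_le_ofReal ?_
    calc ‖y‖ ^ (-β) ≤ ((1 + ‖y‖) / 2) ^ (-β) :=
          Real.rpow_le_rpow_of_nonpos (by positivity) (by linarith [hy.out]) (by linarith)
      _ = 2 ^ β * (1 + ‖y‖) ^ (-β) := by
          rw [Real.div_rpow (by positivity) zero_le_two, Real.rpow_neg zero_le_two, div_inv_eq_mul,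
            mul_comm]
  calc ∫⁻ y in {y : E | 1 < ‖y‖}, ENNReal.ofReal (‖y‖ ^ (-β)) ∂μ
      ≤ ∫⁻ y in {y : E | 1 < ‖y‖}, ENNReal.ofReal (2 ^ β) * ENNReal.ofReal ((1 + ‖y‖) ^ (-β)) ∂μ :=
        setLIntegral_mono (by fun_prop) hpoint
    _ ≤ ∫⁻ y, ENNReal.ofReal (2 ^ β) * ENNReal.ofReal ((1 + ‖y‖) ^ (-β)) ∂μ :=
        setLIntegral_le_lintegral _ _
    _ = ENNReal.ofReal (2 ^ β) * ∫⁻ y, ENNReal.ofReal ((1 + ‖y‖) ^ (-β)) ∂μ :=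
        lintegral_const_mul' _ _ ENNReal.ofReal_ne_top
    _ < ∞ := ENNReal.mul_lt_top ENNReal.ofReal_lt_top (finite_integral_one_add_norm hβ)

lemma tendsto_setLIntegral_norm_gt_rpow_neg_atTop (hβ : (Module.finrank ℝ E : ℝ) < β) :
    Tendsto (fun r : ℝ => ∫⁻ y in {y : E | r < ‖y‖}, ENNReal.ofReal (‖y‖ ^ (-β)) ∂μ)
      atTop (𝓝 0) :=
  tendsto_setLIntegral_norm_gt_atTop (setLIntegral_norm_gt_one_rpow_neg_lt_top hβ).ne

end FiniteDimensional

theorem stmt3_general (d : ℕ) (β : ℝ) (hβ : (d : ℝ) < β)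
    (c₁ c₂ : ℝ) (hc₁ : 0 < c₁)
    (η : EuclideanSpace ℝ (Fin d) → ℝ)
    (hη : ∀ x : EuclideanSpace ℝ (Fin d), ‖x‖ = 1 → η x ∈ Set.Icc c₁ c₂)
    (f : EuclideanSpace ℝ (Fin d) → ℝ)
    (hf : ∀ x : EuclideanSpace ℝ (Fin d), x ≠ 0 →
      f x = η ((1 / ‖x‖) • x) * ‖x‖ ^ (-β)) :
    (∀ r : ℝ, 1 < r → ∀ x : EuclideanSpace ℝ (Fin d), 1 ≤ ‖x‖ →
      (∫⁻ y in {y : EuclideanSpace ℝ (Fin d) | r < ‖x - y‖ ∧ r < ‖y‖},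
          ENNReal.ofReal (f (x - y) * f y / f x)) ≤
        ENNReal.ofReal ((2 : ℝ) ^ (1 + β) * (c₂ ^ 2 / c₁)) *
          ∫⁻ y in {y : EuclideanSpace ℝ (Fin d) | r < ‖y‖},
            ENNReal.ofReal (‖y‖ ^ (-β))) ∧
    Tendsto (fun r : ℝ =>
        ⨆ x : {x : EuclideanSpace ℝ (Fin d) // 1 ≤ ‖x‖},
          ∫⁻ y in {y : EuclideanSpace ℝ (Fin d) | r < ‖(x : EuclideanSpace ℝ (Fin d)) - y‖ ∧ r < ‖y‖},
            ENNReal.ofReal (f ((x : EuclideanSpace ℝ (Fin d)) - y) * f y / f (x : EuclideanSpace ℝ (Fin d))))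
      atTop (nhds 0) := by
  have hbound (r : ℝ) (hr : 1 < r) (x : EuclideanSpace ℝ (Fin d)) (hx : 1 ≤ ‖x‖) :=
    setLIntegral_apply_sub_mul_apply_div_apply_le (μ := volume) ((Nat.cast_nonneg d).trans hβ.le)
      hc₁ (fun z hz => mem_Icc_mul_norm_rpow_neg_of_eq hη hf hz) (zero_le_one.trans hr.le)
      (norm_pos_iff.1 (one_pos.trans_le hx))
  refine ⟨hbound, ?_⟩
  have htail := ENNReal.Tendsto.const_mul
    (tendsto_setLIntegral_norm_gt_rpow_neg_atTop (μ := volume) (E := EuclideanSpace ℝ (Fin d))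
      (by rwa [finrank_euclideanSpace_fin]))
    (Or.inr (ENNReal.ofReal_ne_top (r := (2 : ℝ) ^ (1 + β) * (c₂ ^ 2 / c₁))))
  rw [mul_zero] at htail
  refine tendsto_of_tendsto_of_tendsto_of_le_of_le' tendsto_const_nhds htail
    (Eventually.of_forall fun r => zero_le) ?_
  filter_upwards [eventually_gt_atTop 1] with r hr
  exact iSup_le fun x => hbound r hr x x.2

theorem stmt3 (d : ℕ) (hd : 1 ≤ d) (β : ℝ) (hβ : (d : ℝ) < β)
    (c₁ c₂ : ℝ) (hc₁ : 0 < c₁) (hc : c₁ ≤ c₂)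
    (η : EuclideanSpace ℝ (Fin d) → ℝ)
    (hη : ∀ x : EuclideanSpace ℝ (Fin d), ‖x‖ = 1 → η x ∈ Set.Icc c₁ c₂)
    (f : EuclideanSpace ℝ (Fin d) → ℝ) (hfm : Measurable f)
    (hf : ∀ x : EuclideanSpace ℝ (Fin d), x ≠ 0 →
      f x = η ((1 / ‖x‖) • x) * ‖x‖ ^ (-β)) :
    (∀ r : ℝ, 1 < r → ∀ x : EuclideanSpace ℝ (Fin d), 1 ≤ ‖x‖ →
      (∫⁻ y in {y : EuclideanSpace ℝ (Fin d) | r < ‖x - y‖ ∧ r < ‖y‖},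
          ENNReal.ofReal (f (x - y) * f y / f x)) ≤
        ENNReal.ofReal ((2 : ℝ) ^ (1 + β) * (c₂ ^ 2 / c₁)) *
          ∫⁻ y in {y : EuclideanSpace ℝ (Fin d) | r < ‖y‖},
            ENNReal.ofReal (‖y‖ ^ (-β))) ∧
    Tendsto (fun r : ℝ =>
        ⨆ x : {x : EuclideanSpace ℝ (Fin d) // 1 ≤ ‖x‖},
          ∫⁻ y in {y : EuclideanSpace ℝ (Fin d) | r < ‖(x : EuclideanSpace ℝ (Fin d)) - y‖ ∧ r < ‖y‖},
            ENNReal.ofReal (f ((x : EuclideanSpace ℝ (Fin d)) - y) * f y / f (x : EuclideanSpace ℝ (Fin d))))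
      atTop (nhds 0) :=
  stmt3_general d β hβ c₁ c₂ hc₁ η hη f hf
end

section
/- Let f : ℝ^d → [0,∞) be integrable and satisfy f(x) ≍ g(|x|) for |x| ≥ A (with A ≥ 1, g decreasing and positive, comparability constant c). Then for |x| ≥ A and r ≥ A: ∫_{|x-y|>r, |y|>r} f(x-y)f(y)/f(x) dy ≤ c⁶ ∫_{||x|θ - y|>r, |y|>r} f(|x|θ - y)f(y)/f(|x|θ) dy for any fixed unit vector θ; consequently K^A_f(r) ≤ c⁶ sup_{t≥A} (1/f(tθ)) ∫_{|tθ-y|>r, |y|>r} f(tθ-y)f(y) dy. -/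
open Filter MeasureTheory
open scoped ENNReal

/-- `KA d A f r = sup_{‖x‖ ≥ A} ∫_{‖x-y‖ > r, ‖y‖ > r} f(x-y) f(y) / f(x) dy`,
valued in `ℝ≥0∞`. -/
noncomputable def KA (d : ℕ) (A : ℝ) (f : EuclideanSpace ℝ (Fin d) → ℝ) (r : ℝ) : ℝ≥0∞ :=
  ⨆ x : {x : EuclideanSpace ℝ (Fin d) // A ≤ ‖x‖},
    ∫⁻ y in {y : EuclideanSpace ℝ (Fin d) | r < ‖(x : EuclideanSpace ℝ (Fin d)) - y‖ ∧ r < ‖y‖},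
      ENNReal.ofReal (f ((x : EuclideanSpace ℝ (Fin d)) - y) * f y / f (x : EuclideanSpace ℝ (Fin d)))

/-!
On `‖x‖, ‖x - y‖, ‖y‖ ≥ A` each of the three factors of `f (x - y) f y / f x` is within a factor
`c` of the corresponding value of `g`, so the integrand is within `c³` of the radial quantity
`g ‖x - y‖ g ‖y‖ / g ‖x‖`. Integrated over `{‖x - y‖ > r, ‖y‖ > r}` this quantity depends on `x`
only through `‖x‖`: the reflection exchanging `x` and `‖x‖ θ` preserves Lebesgue measure and all
norms involved. Comparing back to `f` costs another `c³`.
-/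

lemma measurableSet_norm_sub_gt_and_norm_gt {E : Type*} [NormedAddCommGroup E] [MeasurableSpace E]
    [OpensMeasurableSpace E] (x : E) (r : ℝ) :
    MeasurableSet {y : E | r < ‖x - y‖ ∧ r < ‖y‖} :=
  ((isOpen_lt continuous_const (continuous_const.sub continuous_id).norm).and
    (isOpen_lt continuous_const continuous_norm)).measurableSet

lemma mul_div_le_pow_three_mul_div {a b e a' b' e' c : ℝ}
    (ha : 0 ≤ a) (hb : 0 ≤ b) (he : 0 < e) (he' : 0 < e')
    (haa' : a ≤ c * a') (hbb' : b ≤ c * b') (hee' : e' ≤ c * e) :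
    a * b / e ≤ c ^ 3 * (a' * b' / e') := by
  have hab : a * b ≤ (c * a') * (c * b') :=
    mul_le_mul haa' hbb' hb (ha.trans haa')
  rw [div_le_iff₀ he, mul_div_assoc', div_mul_eq_mul_div, le_div_iff₀ he']
  calc a * b * e' ≤ (c * a') * (c * b') * (c * e) :=
        mul_le_mul hab hee' he'.le ((mul_nonneg ha hb).trans hab)
    _ = c ^ 3 * (a' * b') * e := by ring

section Comparable

variable {E : Type*} [NormedAddCommGroup E] {f : E → ℝ} {g : ℝ → ℝ} {A c : ℝ}

lemma le_mul_of_comparable (hc : 0 < c)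
    (hcomp : ∀ x, A ≤ ‖x‖ → (1 / c) * g ‖x‖ ≤ f x ∧ f x ≤ c * g ‖x‖) {x : E} (hx : A ≤ ‖x‖) :
    g ‖x‖ ≤ c * f x := by
  have := (hcomp x hx).1
  rwa [one_div, inv_mul_le_iff₀ hc] at this

lemma pos_of_comparable (hc : 0 < c) (hgpos : ∀ t, A ≤ t → 0 < g t)
    (hcomp : ∀ x, A ≤ ‖x‖ → (1 / c) * g ‖x‖ ≤ f x ∧ f x ≤ c * g ‖x‖) {x : E} (hx : A ≤ ‖x‖) :
    0 < f x :=
  lt_of_lt_of_le (by have := hgpos _ hx; positivity) (hcomp x hx).1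

variable (hc : 0 < c) (hgpos : ∀ t, A ≤ t → 0 < g t)
  (hcomp : ∀ x, A ≤ ‖x‖ → (1 / c) * g ‖x‖ ≤ f x ∧ f x ≤ c * g ‖x‖)
include hc hgpos hcomp

lemma ratio_le_of_comparable {x y : E} (hx : A ≤ ‖x‖) (hxy : A ≤ ‖x - y‖) (hy : A ≤ ‖y‖) :
    f (x - y) * f y / f x ≤ c ^ 3 * (g ‖x - y‖ * g ‖y‖ / g ‖x‖) :=
  mul_div_le_pow_three_mul_div (pos_of_comparable hc hgpos hcomp hxy).le
    (pos_of_comparable hc hgpos hcomp hy).le (pos_of_comparable hc hgpos hcomp hx) (hgpos _ hx)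
    (hcomp _ hxy).2 (hcomp _ hy).2 (le_mul_of_comparable hc hcomp hx)

lemma ratio_ge_of_comparable {x y : E} (hx : A ≤ ‖x‖) (hxy : A ≤ ‖x - y‖) (hy : A ≤ ‖y‖) :
    g ‖x - y‖ * g ‖y‖ / g ‖x‖ ≤ c ^ 3 * (f (x - y) * f y / f x) :=
  mul_div_le_pow_three_mul_div (hgpos _ hxy).le (hgpos _ hy).le (hgpos _ hx)
    (pos_of_comparable hc hgpos hcomp hx) (le_mul_of_comparable hc hcomp hxy)
    (le_mul_of_comparable hc hcomp hy) (hcomp _ hx).2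

end Comparable

section Radial

variable {E : Type*} [NormedAddCommGroup E] [InnerProductSpace ℝ E] [FiniteDimensional ℝ E]
  [MeasurableSpace E] [BorelSpace E]

theorem setLIntegral_norm_sub_norm_eq_of_norm_eq (F : ℝ → ℝ → ℝ≥0∞) (P : ℝ → ℝ → Prop)
    {x x' : E} (h : ‖x‖ = ‖x'‖) :
    ∫⁻ y in {y | P ‖x - y‖ ‖y‖}, F ‖x - y‖ ‖y‖ =
      ∫⁻ y in {y | P ‖x' - y‖ ‖y‖}, F ‖x' - y‖ ‖y‖ := by
  set R : E ≃ₗᵢ[ℝ] E := Submodule.reflection (ℝ ∙ (x - x'))ᗮ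
  have hR : ∀ y, ‖x' - R y‖ = ‖x - y‖ := fun y => by
    rw [← Submodule.reflection_sub h, ← map_sub, R.norm_map]
  have hpre : R ⁻¹' {y | P ‖x' - y‖ ‖y‖} = {y | P ‖x - y‖ ‖y‖} := by
    ext y; simp only [Set.mem_preimage, Set.mem_ofPred_eq, hR, R.norm_map]
  rw [← hpre, ← R.measurePreserving.setLIntegral_comp_preimage_emb
    R.toHomeomorph.measurableEmbedding (fun z => F ‖x' - z‖ ‖z‖)]
  simp only [hR, R.norm_map]

theorem setLIntegral_ratio_le_of_norm_eq {f : E → ℝ} {g : ℝ → ℝ} {A c r : ℝ} (hc : 0 < c)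
    (hgpos : ∀ t, A ≤ t → 0 < g t)
    (hcomp : ∀ x, A ≤ ‖x‖ → (1 / c) * g ‖x‖ ≤ f x ∧ f x ≤ c * g ‖x‖)
    {x x' : E} (hxx' : ‖x‖ = ‖x'‖) (hx : A ≤ ‖x‖) (hr : A ≤ r) :
    ∫⁻ y in {y | r < ‖x - y‖ ∧ r < ‖y‖}, ENNReal.ofReal (f (x - y) * f y / f x) ≤
      ENNReal.ofReal (c ^ 6) *
        ∫⁻ y in {y | r < ‖x' - y‖ ∧ r < ‖y‖}, ENNReal.ofReal (f (x' - y) * f y / f x') := by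
  have hx' : A ≤ ‖x'‖ := hxx' ▸ hx
  calc ∫⁻ y in {y | r < ‖x - y‖ ∧ r < ‖y‖}, ENNReal.ofReal (f (x - y) * f y / f x)
      ≤ ∫⁻ y in {y | r < ‖x - y‖ ∧ r < ‖y‖},
          ENNReal.ofReal (c ^ 3 * (g ‖x - y‖ * g ‖y‖ / g ‖x'‖)) := by
        refine setLIntegral_mono' (measurableSet_norm_sub_gt_and_norm_gt x r) fun y hy => ?_
        rw [← hxx']
        exact ENNReal.ofReal_le_ofReal <| ratio_le_of_comparable hc hgpos hcomp hx
          (hr.trans hy.1.le) (hr.trans hy.2.le)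
    _ = ∫⁻ y in {y | r < ‖x' - y‖ ∧ r < ‖y‖},
          ENNReal.ofReal (c ^ 3 * (g ‖x' - y‖ * g ‖y‖ / g ‖x'‖)) :=
        setLIntegral_norm_sub_norm_eq_of_norm_eq
          (fun a b => ENNReal.ofReal (c ^ 3 * (g a * g b / g ‖x'‖))) (fun a b => r < a ∧ r < b) hxx'
    _ ≤ ∫⁻ y in {y | r < ‖x' - y‖ ∧ r < ‖y‖},
          ENNReal.ofReal (c ^ 6) * ENNReal.ofReal (f (x' - y) * f y / f x') := by
        refine setLIntegral_mono' (measurableSet_norm_sub_gt_and_norm_gt x' r) fun y hy => ?_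
        rw [← ENNReal.ofReal_mul (by positivity), show c ^ 6 = c ^ 3 * c ^ 3 by ring, mul_assoc]
        exact ENNReal.ofReal_le_ofReal <| mul_le_mul_of_nonneg_left
          (ratio_ge_of_comparable hc hgpos hcomp hx' (hr.trans hy.1.le) (hr.trans hy.2.le))
          (by positivity)
    _ = _ := lintegral_const_mul' _ _ ENNReal.ofReal_ne_top

end Radial

theorem stmt11_general (d : ℕ) (f : EuclideanSpace ℝ (Fin d) → ℝ)
    (A c : ℝ) (hc : 1 ≤ c)
    (g : ℝ → ℝ) (hgpos : ∀ r : ℝ, A ≤ r → 0 < g r)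
    (hcomp : ∀ x : EuclideanSpace ℝ (Fin d), A ≤ ‖x‖ →
      (1 / c) * g ‖x‖ ≤ f x ∧ f x ≤ c * g ‖x‖)
    (θ : EuclideanSpace ℝ (Fin d)) (hθ : ‖θ‖ = 1) :
    (∀ x : EuclideanSpace ℝ (Fin d), A ≤ ‖x‖ → ∀ r : ℝ, A ≤ r →
      (∫⁻ y in {y : EuclideanSpace ℝ (Fin d) | r < ‖x - y‖ ∧ r < ‖y‖},
          ENNReal.ofReal (f (x - y) * f y / f x)) ≤
        ENNReal.ofReal (c ^ 6) *
          ∫⁻ y in {y : EuclideanSpace ℝ (Fin d) | r < ‖‖x‖ • θ - y‖ ∧ r < ‖y‖},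
            ENNReal.ofReal (f (‖x‖ • θ - y) * f y / f (‖x‖ • θ))) ∧
    (∀ r : ℝ, A ≤ r →
      KA d A f r ≤ ENNReal.ofReal (c ^ 6) *
        ⨆ t : {t : ℝ // A ≤ t},
          (∫⁻ y in {y : EuclideanSpace ℝ (Fin d) | r < ‖(t : ℝ) • θ - y‖ ∧ r < ‖y‖},
              ENNReal.ofReal (f ((t : ℝ) • θ - y) * f y)) /
            ENNReal.ofReal (f ((t : ℝ) • θ))) := by
  have hc0 : 0 < c := one_pos.trans_le hc
  have hnorm : ∀ x : EuclideanSpace ℝ (Fin d), ‖‖x‖ • θ‖ = ‖x‖ := fun x => by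
    rw [norm_smul, hθ, mul_one, norm_norm]
  have hcompare := fun x hx r hr =>
    setLIntegral_ratio_le_of_norm_eq (r := r) hc0 hgpos hcomp (hnorm x).symm hx hr
  refine ⟨hcompare, fun r hr => iSup_le fun ⟨x, hx⟩ => (hcompare x hx r hr).trans ?_⟩
  have hfθ : 0 < f (‖x‖ • θ) := pos_of_comparable hc0 hgpos hcomp ((hnorm x).symm ▸ hx)
  gcongr
  simp_rw [ENNReal.ofReal_div_of_pos hfθ, div_eq_mul_inv]
  rw [lintegral_mul_const' _ _ (ENNReal.inv_ne_top.mpr (ENNReal.ofReal_pos.mpr hfθ).ne')]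
  exact le_iSup_of_le (⟨‖x‖, hx⟩ : {t : ℝ // A ≤ t}) le_rfl

theorem stmt11 (d : ℕ) (f : EuclideanSpace ℝ (Fin d) → ℝ)
    (hfm : Measurable f) (hf0 : ∀ x, 0 ≤ f x) (hfint : Integrable f)
    (A c : ℝ) (hA : 1 ≤ A) (hc : 1 ≤ c)
    (g : ℝ → ℝ) (hgpos : ∀ r : ℝ, A ≤ r → 0 < g r)
    (hgdec : ∀ s t : ℝ, A ≤ s → s ≤ t → g t ≤ g s)
    (hcomp : ∀ x : EuclideanSpace ℝ (Fin d), A ≤ ‖x‖ →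
      (1 / c) * g ‖x‖ ≤ f x ∧ f x ≤ c * g ‖x‖)
    (θ : EuclideanSpace ℝ (Fin d)) (hθ : ‖θ‖ = 1) :
    (∀ x : EuclideanSpace ℝ (Fin d), A ≤ ‖x‖ → ∀ r : ℝ, A ≤ r →
      (∫⁻ y in {y : EuclideanSpace ℝ (Fin d) | r < ‖x - y‖ ∧ r < ‖y‖},
          ENNReal.ofReal (f (x - y) * f y / f x)) ≤
        ENNReal.ofReal (c ^ 6) *
          ∫⁻ y in {y : EuclideanSpace ℝ (Fin d) | r < ‖‖x‖ • θ - y‖ ∧ r < ‖y‖},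
            ENNReal.ofReal (f (‖x‖ • θ - y) * f y / f (‖x‖ • θ))) ∧
    (∀ r : ℝ, A ≤ r →
      KA d A f r ≤ ENNReal.ofReal (c ^ 6) *
        ⨆ t : {t : ℝ // A ≤ t},
          (∫⁻ y in {y : EuclideanSpace ℝ (Fin d) | r < ‖(t : ℝ) • θ - y‖ ∧ r < ‖y‖},
              ENNReal.ofReal (f ((t : ℝ) • θ - y) * f y)) /
            ENNReal.ofReal (f ((t : ℝ) • θ))) :=
  stmt11_general d f A c hc g hgpos hcomp θ hθ
end

section
/- (Main Theorem) Let f ∈ L¹(ℝ^d), f ≥ 0, and suppose there exist A ≥ 1 and a decreasing function g : [A,∞) → (0,∞) with f(x) ≍ g(|x|) for |x| ≥ A. Let θ be a unit vector and γ ≥ 0, and assume: (i) f(tθ-y)/f(tθ) → e^{γ(θ·y)} as t → ∞ for every y ∈ ℝ^d; (ii) h = ∫ e^{γ(θ·y)} f(y) dy < ∞ and (f*f)(tθ)/f(tθ) → 2h as t → ∞. Then lim_{r→∞} K^A_f(r) = 0, where K^A_f(r) = sup_{|x|≥A} ∫_{|x-y|>r, |y|>r} f(x-y)f(y)/f(x)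 dy. -/
/-!
Fix a large radius `T`. For `A ≤ ‖x‖ ≤ T`, `f x` is bounded below and `f (x - y)` above on the
region of integration, so the integral is at most a constant times the tail `∫_{‖y‖ > r} f`.
For `‖x‖ ≥ T`, comparability with the radial function `g` lets a rotation carry `x` to `‖x‖ θ` at
the cost of a factor `c⁶`. On the ray `tθ`, `(f * f)(tθ) / f(tθ) → 2h`, while by dominated
convergence each of the two pieces of that integral where `y`, resp. `tθ - y`, lies in the ball of
radius `r₀` tends to `∫_{‖y‖ ≤ r₀} e^{γ⟪θ, y⟫} f(y) dy`. What remains tends to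
`2 ∫_{‖y‖ > r₀} e^{γ⟪θ, y⟫} f(y) dy`, which is small once `r₀` is large.
-/

open Filter MeasureTheory
open scoped ENNReal InnerProductSpace

open Set Metric
open scoped Topology

theorem tendsto_setIntegral_norm_gt_zero {α G : Type*} [NormedAddCommGroup α] [MeasurableSpace α]
    [OpensMeasurableSpace α] [NormedAddCommGroup G] [NormedSpace ℝ G] {μ : Measure α}
    {f : α → G} (hf : Integrable f μ) :
    Tendsto (fun r : ℝ => ∫ y in {y | r < ‖y‖}, f y ∂μ) atTop (𝓝 0) := by
  have hempty : (⋂ r : ℝ, {y : α | r < ‖y‖}) = ∅ :=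
    eq_empty_of_forall_notMem fun y hy => lt_irrefl ‖y‖ (mem_iInter.1 hy ‖y‖)
  simpa [hempty] using tendsto_setIntegral_of_antitone (s := fun r : ℝ => {y : α | r < ‖y‖})
    (fun r => measurableSet_lt measurable_const measurable_norm)
    (fun r s hrs y hy => hrs.trans_lt hy) ⟨0, hf.integrableOn⟩

theorem le_sq_mul_of_norm_le {E : Type*} [Norm E] {f : E → ℝ} {g : ℝ → ℝ} {A c : ℝ}
    (hc : 0 < c) (hgdec : ∀ s t : ℝ, A ≤ s → s ≤ t → g t ≤ g s)
    (hcomp : ∀ x : E, A ≤ ‖x‖ → 1 / c * g ‖x‖ ≤ f x ∧ f x ≤ c * g ‖x‖)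
    {z w : E} (hw : A ≤ ‖w‖) (hwz : ‖w‖ ≤ ‖z‖) : f z ≤ c ^ 2 * f w := by
  have hgw : g ‖w‖ ≤ c * f w := by
    have := (hcomp w hw).1
    rwa [one_div, inv_mul_le_iff₀ hc] at this
  calc f z ≤ c * g ‖z‖ := (hcomp z (hw.trans hwz)).2
    _ ≤ c * (c * f w) := by gcongr; exact (hgdec _ _ hw hwz).trans hgw
    _ = c ^ 2 * f w := by ring

section TailRegion

variable {E : Type*} [NormedAddCommGroup E]

def tailRegion (r : ℝ) (x : E) : Set E := {y | r < ‖x - y‖ ∧ r < ‖y‖}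

theorem tailRegion_anti (x : E) : Antitone fun r : ℝ => tailRegion r x :=
  fun _ _ hrs _ hy => ⟨hrs.trans_lt hy.1, hrs.trans_lt hy.2⟩

theorem tailRegion_subset (r : ℝ) (x : E) : tailRegion r x ⊆ {y | r < ‖y‖} := fun _ hy => hy.2

theorem tailRegion_eq_compl (r : ℝ) (x : E) :
    tailRegion r x = (closedBall 0 r ∪ (x - ·) ⁻¹' closedBall 0 r)ᶜ := by
  ext y
  simp only [tailRegion, mem_ofPred_eq, compl_union, mem_inter_iff, mem_compl_iff, mem_preimage,
    mem_closedBall_zero_iff, not_le]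
  exact and_comm

variable [MeasurableSpace E]

theorem measurableSet_tailRegion [OpensMeasurableSpace E] (r : ℝ) (x : E) :
    MeasurableSet (tailRegion r x) :=
  (measurableSet_lt measurable_const (continuous_const.sub continuous_id).norm.measurable).inter
    (measurableSet_lt measurable_const measurable_norm)

variable [MeasurableAdd E] [MeasurableNeg E] {μ : Measure E} [μ.IsAddLeftInvariant]
  [μ.IsNegInvariant]

theorem integrable_mul_comp_sub {f : E → ℝ} (hf : Integrable f μ) {A M : ℝ}
    (hbdd : ∀ z, A ≤ ‖z‖ → ‖f z‖ ≤ M) {x : E} (hx : 2 * A ≤ ‖x‖) :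
    Integrable (fun y => f (x - y) * f y) μ := by
  have hfx := hf.comp_sub_left x
  refine (hfx.norm.add hf.norm).const_mul M |>.mono'
    (hfx.aestronglyMeasurable.mul hf.aestronglyMeasurable) (ae_of_all _ fun y => ?_)
  simp only [Pi.add_apply, norm_mul]
  by_cases hxy : A ≤ ‖x - y‖
  · have hM := hbdd _ hxy
    have := (norm_nonneg _).trans hM
    nlinarith [norm_nonneg (f (x - y)), norm_nonneg (f y)]
  · have hy : A ≤ ‖y‖ := by linarith [norm_sub_norm_le x y]
    have hM := hbdd _ hy
    have := (norm_nonneg _).trans hM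
    nlinarith [norm_nonneg (f (x - y)), norm_nonneg (f y)]

-- The pieces of the integral where `y` and where `x - y` lie in `closedBall 0 r` are disjoint, and
-- equal by the substitution `y ↦ x - y`.
theorem integral_mul_comp_sub_eq_two_mul_add [OpensMeasurableSpace E] {f : E → ℝ} {x : E} {r : ℝ}
    (hint : Integrable (fun y => f (x - y) * f y) μ) (hx : 2 * r < ‖x‖) :
    ∫ y, f (x - y) * f y ∂μ =
      2 * ∫ y in closedBall 0 r, f (x - y) * f y ∂μ +
        ∫ y in tailRegion r x, f (x - y) * f y ∂μ := by
  set B : Set E := closedBall 0 r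
  set B' : Set E := (x - ·) ⁻¹' B
  have hB' : MeasurableSet B' := (MeasurableEquiv.subLeft x).measurable measurableSet_closedBall
  have hdisj : Disjoint B B' := by
    refine disjoint_left.2 fun y hy hy' => hx.not_ge ?_
    rw [mem_closedBall_zero_iff] at hy
    have : ‖x - y‖ ≤ r := mem_closedBall_zero_iff.1 hy'
    linarith [norm_sub_norm_le x y]
  have hsymm : ∫ y in B', f (x - y) * f y ∂μ = ∫ y in B, f (x - y) * f y ∂μ := by
    have hpre : (x - ·) ⁻¹' B' = B := by ext y; simp [B', sub_sub_cancel]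
    rw [← (Measure.measurePreserving_sub_left μ x).setIntegral_preimage_emb
      (MeasurableEquiv.subLeft x).measurableEmbedding, hpre]
    simp only [sub_sub_cancel, mul_comm]
  rw [← integral_add_compl (measurableSet_closedBall.union hB') hint,
    setIntegral_union hdisj hB' hint.integrableOn hint.integrableOn, hsymm, ← tailRegion_eq_compl]
  ring

end TailRegion

section ConvTailRatio

variable {E : Type*} [NormedAddCommGroup E] [MeasureSpace E]

-- `KA d A f r` unfolds to `⨆ x : {x // A ≤ ‖x‖}, convTailRatio f r x`.
noncomputable def convTailRatio (f : E → ℝ) (r : ℝ) (x : E) : ℝ≥0∞ :=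
  ∫⁻ y in tailRegion r x, ENNReal.ofReal (f (x - y) * f y / f x)

theorem convTailRatio_anti (f : E → ℝ) (x : E) : Antitone fun r => convTailRatio f r x :=
  fun _ _ hrs => lintegral_mono_set (tailRegion_anti x hrs)

theorem convTailRatio_eq_ofReal {f : E → ℝ} (hf0 : ∀ x, 0 ≤ f x) {x : E}
    (hint : Integrable fun y => f (x - y) * f y) (r : ℝ) :
    convTailRatio f r x = ENNReal.ofReal ((∫ y in tailRegion r x, f (x - y) * f y) / f x) := by
  rw [convTailRatio, ← integral_div, ofReal_integral_eq_lintegral_ofReal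
    (hint.div_const _).integrableOn
    (ae_of_all _ fun y => div_nonneg (mul_nonneg (hf0 _) (hf0 _)) (hf0 x))]

theorem eventually_convTailRatio_le [OpensMeasurableSpace E] {f : E → ℝ} (hf : Integrable f)
    (hf0 : ∀ x, 0 ≤ f x) {A M m : ℝ} (hM : 0 ≤ M) (hbdd : ∀ z, A ≤ ‖z‖ → f z ≤ M) (hm : 0 < m)
    {ε : ℝ} (hε : 0 < ε) :
    ∀ᶠ r in atTop, ∀ x, m ≤ f x → convTailRatio f r x ≤ ENNReal.ofReal ε := by
  have htail := (tendsto_setIntegral_norm_gt_zero hf).const_mul (M / m)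
  rw [mul_zero] at htail
  filter_upwards [htail.eventually (eventually_le_nhds hε), eventually_ge_atTop A]
    with r hr hrA x hx
  have hpt : ∀ y ∈ tailRegion r x, f (x - y) * f y / f x ≤ M / m * f y := fun y hy => by
    calc f (x - y) * f y / f x ≤ f (x - y) * f y / m :=
          div_le_div_of_nonneg_left (mul_nonneg (hf0 _) (hf0 _)) hm hx
      _ ≤ M * f y / m := by gcongr; exacts [hf0 y, hbdd _ (hrA.trans hy.1.le)]
      _ = M / m * f y := by ring
  calc convTailRatio f r x ≤ ∫⁻ y in tailRegion r x, ENNReal.ofReal (M / m * f y) :=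
        setLIntegral_mono' (measurableSet_tailRegion r x) fun y hy =>
          ENNReal.ofReal_le_ofReal (hpt y hy)
    _ ≤ ∫⁻ y in {y | r < ‖y‖}, ENNReal.ofReal (M / m * f y) :=
        lintegral_mono_set (tailRegion_subset r x)
    _ = ENNReal.ofReal (M / m * ∫ y in {y | r < ‖y‖}, f y) := by
        rw [← integral_const_mul, ofReal_integral_eq_lintegral_ofReal
          (hf.const_mul _).integrableOn (ae_of_all _ fun y => by have := hf0 y; positivity)]
    _ ≤ ENNReal.ofReal ε := ENNReal.ofReal_le_ofReal hr

end ConvTailRatio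

theorem eventually_div_le_of_mem_closedBall {E : Type*} [NormedAddCommGroup E] [NormedSpace ℝ E]
    {f : E → ℝ} {θ : E} {A C : ℝ} (hθ : ‖θ‖ = 1) (hC : 0 ≤ C)
    (hpos : ∀ x, A ≤ ‖x‖ → 0 < f x) (hdec : ∀ z w : E, A ≤ ‖w‖ → ‖w‖ ≤ ‖z‖ → f z ≤ C * f w)
    {r L : ℝ} (hL : Tendsto (fun t : ℝ => f (t • θ - r • θ) / f (t • θ)) atTop (𝓝 L)) :
    ∀ᶠ t : ℝ in atTop, ∀ y ∈ closedBall (0 : E) r, f (t • θ - y) / f (t • θ) ≤ C * (L + 1) := by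
  filter_upwards [hL.eventually (eventually_lt_nhds (lt_add_one L)),
    eventually_ge_atTop (A + r), eventually_ge_atTop r] with t hlt htA htr y hy
  rw [mem_closedBall_zero_iff] at hy
  have hnorm : ∀ s : ℝ, 0 ≤ s → ‖s • θ‖ = s := fun s hs => by
    rw [norm_smul, hθ, mul_one, Real.norm_of_nonneg hs]
  have hr : 0 ≤ r := (norm_nonneg y).trans hy
  have hw : ‖(t - r) • θ‖ = t - r := hnorm _ (by linarith)
  have hft : 0 < f (t • θ) := hpos _ (by rw [hnorm t (by linarith)]; linarith)
  have hfy : f (t • θ - y) ≤ C * f (t • θ - r • θ) := by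
    rw [← sub_smul]
    refine hdec _ _ (by rw [hw]; linarith) ?_
    rw [hw]
    linarith [norm_sub_norm_le (t • θ) y, hnorm t (by linarith)]
  rw [div_lt_iff₀ hft] at hlt
  rw [div_le_iff₀ hft]
  calc f (t • θ - y) ≤ C * f (t • θ - r • θ) := hfy
    _ ≤ C * ((L + 1) * f (t • θ)) := by gcongr
    _ = C * (L + 1) * f (t • θ) := by ring

section InnerProductSpace

variable {E : Type*} [NormedAddCommGroup E] [InnerProductSpace ℝ E] [FiniteDimensional ℝ E]
  [MeasurableSpace E] [BorelSpace E] {f : E → ℝ} {θ : E} {A C : ℝ}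

theorem convTailRatio_le_of_norm_eq (hf0 : ∀ x, 0 ≤ f x) {r : ℝ}
    (hrad : ∀ z w : E, A ≤ ‖w‖ → ‖w‖ = ‖z‖ → f z ≤ C * f w) (hr : A ≤ r) {x z : E}
    (hz : A ≤ ‖z‖) (hfz : 0 < f z) (hxz : ‖x‖ = ‖z‖) :
    convTailRatio f r x ≤ ENNReal.ofReal (C ^ 3) * convTailRatio f r z := by
  obtain ⟨e, rfl⟩ : ∃ e : E ≃ₗᵢ[ℝ] E, e z = x := ⟨_, Submodule.reflection_sub hxz.symm⟩
  have hfez : f z ≤ C * f (e z) := hrad _ _ (by rwa [e.norm_map]) (e.norm_map z)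
  have hC : 0 < C := pos_of_mul_pos_left (hfz.trans_le hfez) (hf0 _)
  have hpre : e ⁻¹' tailRegion r (e z) = tailRegion r z := by
    ext y; simp [tailRegion, ← map_sub, e.norm_map]
  have hpt : ∀ y ∈ tailRegion r z,
      f (e (z - y)) * f (e y) / f (e z) ≤ C ^ 3 * (f (z - y) * f y / f z) := fun y hy => by
    have h1 : f (e (z - y)) ≤ C * f (z - y) := hrad _ _ (hr.trans hy.1.le) (e.norm_map _).symm
    have h2 : f (e y) ≤ C * f y := hrad _ _ (hr.trans hy.2.le) (e.norm_map _).symm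
    calc f (e (z - y)) * f (e y) / f (e z) ≤ C * f (z - y) * (C * f y) / f (e z) :=
          div_le_div_of_nonneg_right (mul_le_mul h1 h2 (hf0 _) (mul_nonneg hC.le (hf0 _)))
            (hf0 _)
      _ ≤ C * f (z - y) * (C * f y) / (f z / C) := by
          refine div_le_div_of_nonneg_left (by have := hf0 y; have := hf0 (z - y); positivity)
            (by positivity) ?_
          rwa [div_le_iff₀' hC]
      _ = C ^ 3 * (f (z - y) * f y / f z) := by field_simp
  calc convTailRatio f r (e z)
      = ∫⁻ y in tailRegion r z, ENNReal.ofReal (f (e (z - y)) * f (e y) / f (e z)) := by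
        rw [convTailRatio, ← hpre, ← e.measurePreserving.setLIntegral_comp_preimage_emb
          e.toHomeomorph.measurableEmbedding]
        simp only [map_sub]
    _ ≤ ∫⁻ y in tailRegion r z,
          ENNReal.ofReal (C ^ 3) * ENNReal.ofReal (f (z - y) * f y / f z) :=
        setLIntegral_mono' (measurableSet_tailRegion r z) fun y hy => by
          rw [← ENNReal.ofReal_mul (by positivity)]
          exact ENNReal.ofReal_le_ofReal (hpt y hy)
    _ = ENNReal.ofReal (C ^ 3) * convTailRatio f r z :=
        lintegral_const_mul' _ _ ENNReal.ofReal_ne_top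

theorem tendsto_setIntegral_closedBall_div (hf : Integrable f) (hf0 : ∀ x, 0 ≤ f x)
    (hθ : ‖θ‖ = 1) (hC : 0 ≤ C) (hpos : ∀ x, A ≤ ‖x‖ → 0 < f x)
    (hdec : ∀ z w : E, A ≤ ‖w‖ → ‖w‖ ≤ ‖z‖ → f z ≤ C * f w) {γ : ℝ}
    (hc1 : ∀ y : E, Tendsto (fun t : ℝ => f (t • θ - y) / f (t • θ)) atTop
      (𝓝 (Real.exp (γ * ⟪θ, y⟫_ℝ)))) (r : ℝ) :
    Tendsto (fun t : ℝ => ∫ y in closedBall 0 r, f (t • θ - y) / f (t • θ) * f y) atTop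
      (𝓝 (∫ y in closedBall 0 r, Real.exp (γ * ⟪θ, y⟫_ℝ) * f y)) := by
  refine tendsto_integral_filter_of_dominated_convergence
    (fun y => C * (Real.exp (γ * ⟪θ, r • θ⟫_ℝ) + 1) * f y)
    (Eventually.of_forall fun t =>
      (((hf.comp_sub_left _).div_const _).aestronglyMeasurable.mul hf.aestronglyMeasurable).restrict)
    ?_ (hf.const_mul _).integrableOn (ae_of_all _ fun y => (hc1 y).mul_const (f y))
  filter_upwards [eventually_div_le_of_mem_closedBall hθ hC hpos hdec (hc1 (r • θ))] with t ht
  refine (ae_restrict_iff' measurableSet_closedBall).2 (ae_of_all _ fun y hy => ?_)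
  rw [Real.norm_of_nonneg (mul_nonneg (div_nonneg (hf0 _) (hf0 _)) (hf0 _))]
  exact mul_le_mul_of_nonneg_right (ht y hy) (hf0 y)

theorem tendsto_convTailRatio_smul (hf : Integrable f) (hf0 : ∀ x, 0 ≤ f x)
    (hθ : ‖θ‖ = 1) (hC : 0 ≤ C) (hpos : ∀ x, A ≤ ‖x‖ → 0 < f x)
    (hdec : ∀ z w : E, A ≤ ‖w‖ → ‖w‖ ≤ ‖z‖ → f z ≤ C * f w) {M : ℝ}
    (hbdd : ∀ z, A ≤ ‖z‖ → f z ≤ M) {γ : ℝ}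
    (hc1 : ∀ y : E, Tendsto (fun t : ℝ => f (t • θ - y) / f (t • θ)) atTop
      (𝓝 (Real.exp (γ * ⟪θ, y⟫_ℝ))))
    (hexp : Integrable fun y => Real.exp (γ * ⟪θ, y⟫_ℝ) * f y)
    (hc2 : Tendsto (fun t : ℝ => (∫ y, f (t • θ - y) * f y) / f (t • θ)) atTop
      (𝓝 (2 * ∫ y, Real.exp (γ * ⟪θ, y⟫_ℝ) * f y))) (r : ℝ) :
    Tendsto (fun t : ℝ => convTailRatio f r (t • θ)) atTop
      (𝓝 (ENNReal.ofReal (2 * ∫ y in {y | r < ‖y‖}, Real.exp (γ * ⟪θ, y⟫_ℝ) * f y))) := by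
  have hcompl : (closedBall (0 : E) r)ᶜ = {y | r < ‖y‖} := by ext y; simp
  have hlim : 2 * (∫ y, Real.exp (γ * ⟪θ, y⟫_ℝ) * f y) -
      2 * ∫ y in closedBall 0 r, Real.exp (γ * ⟪θ, y⟫_ℝ) * f y =
      2 * ∫ y in {y | r < ‖y‖}, Real.exp (γ * ⟪θ, y⟫_ℝ) * f y := by
    rw [← integral_add_compl measurableSet_closedBall hexp, hcompl]
    ring
  rw [← hlim]
  refine (ENNReal.tendsto_ofReal (hc2.sub
    ((tendsto_setIntegral_closedBall_div hf hf0 hθ hC hpos hdec hc1 r).const_mul 2))).congr' ?_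
  filter_upwards [eventually_ge_atTop (2 * A), eventually_gt_atTop (2 * r),
    eventually_ge_atTop 0] with t htA htr ht0
  have hnorm : ‖t • θ‖ = t := by rw [norm_smul, hθ, mul_one, Real.norm_of_nonneg ht0]
  have hint := integrable_mul_comp_sub hf
    (fun z hz => (Real.norm_of_nonneg (hf0 z)).trans_le (hbdd z hz)) (hnorm.symm ▸ htA)
  rw [convTailRatio_eq_ofReal hf0 hint, integral_mul_comp_sub_eq_two_mul_add hint (hnorm.symm ▸ htr)]
  simp_rw [div_mul_eq_mul_div, integral_div]
  congr 1
  ring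

theorem exists_convTailRatio_le_of_far (hf : Integrable f) (hf0 : ∀ x, 0 ≤ f x)
    (hθ : ‖θ‖ = 1) (hC : 0 < C) (hpos : ∀ x, A ≤ ‖x‖ → 0 < f x)
    (hdec : ∀ z w : E, A ≤ ‖w‖ → ‖w‖ ≤ ‖z‖ → f z ≤ C * f w) {M : ℝ}
    (hbdd : ∀ z, A ≤ ‖z‖ → f z ≤ M) {γ : ℝ}
    (hc1 : ∀ y : E, Tendsto (fun t : ℝ => f (t • θ - y) / f (t • θ)) atTop
      (𝓝 (Real.exp (γ * ⟪θ, y⟫_ℝ))))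
    (hexp : Integrable fun y => Real.exp (γ * ⟪θ, y⟫_ℝ) * f y)
    (hc2 : Tendsto (fun t : ℝ => (∫ y, f (t • θ - y) * f y) / f (t • θ)) atTop
      (𝓝 (2 * ∫ y, Real.exp (γ * ⟪θ, y⟫_ℝ) * f y))) {ε : ℝ} (hε : 0 < ε) :
    ∃ r₀ T : ℝ, ∀ x : E, T ≤ ‖x‖ → ∀ r, r₀ ≤ r → convTailRatio f r x ≤ ENNReal.ofReal ε := by
  have hεC : 0 < ε / C ^ 3 := by positivity
  have htail := (tendsto_setIntegral_norm_gt_zero hexp).const_mul 2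
  rw [mul_zero] at htail
  obtain ⟨r₀, hr₀, hr₀A⟩ :=
    ((htail.eventually (eventually_lt_nhds hεC)).and (eventually_ge_atTop A)).exists
  obtain ⟨T, hT⟩ := eventually_atTop.1
    ((tendsto_convTailRatio_smul hf hf0 hθ hC.le hpos hdec hbdd hc1 hexp hc2 r₀).eventually
      (eventually_lt_nhds ((ENNReal.ofReal_lt_ofReal_iff hεC).2 hr₀)))
  refine ⟨r₀, max T A, fun x hx r hr => ?_⟩
  have hlt := hT ‖x‖ (le_of_max_le_left hx)
  have hnorm : ‖‖x‖ • θ‖ = ‖x‖ := by rw [norm_smul, hθ, mul_one, norm_norm]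
  have hxA : A ≤ ‖‖x‖ • θ‖ := hnorm.symm ▸ le_of_max_le_right hx
  calc convTailRatio f r x ≤ convTailRatio f r₀ x := convTailRatio_anti f x hr
    _ ≤ ENNReal.ofReal (C ^ 3) * convTailRatio f r₀ (‖x‖ • θ) :=
        convTailRatio_le_of_norm_eq hf0 (fun z w hw h => hdec z w hw h.le) hr₀A hxA
          (hpos _ hxA) hnorm.symm
    _ ≤ ENNReal.ofReal (C ^ 3) * ENNReal.ofReal (ε / C ^ 3) := by gcongr
    _ = ENNReal.ofReal ε := by
        rw [← ENNReal.ofReal_mul (by positivity), mul_div_cancel₀ _ (by positivity)]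

end InnerProductSpace

theorem stmt12_general (d : ℕ) (f : EuclideanSpace ℝ (Fin d) → ℝ)
    (hfint : Integrable f) (hf0 : ∀ x, 0 ≤ f x)
    (A c : ℝ) (hc : 1 ≤ c)
    (g : ℝ → ℝ) (hgpos : ∀ r : ℝ, A ≤ r → 0 < g r)
    (hgdec : ∀ s t : ℝ, A ≤ s → s ≤ t → g t ≤ g s)
    (hcomp : ∀ x : EuclideanSpace ℝ (Fin d), A ≤ ‖x‖ →
      (1 / c) * g ‖x‖ ≤ f x ∧ f x ≤ c * g ‖x‖)
    (θ : EuclideanSpace ℝ (Fin d)) (hθ : ‖θ‖ = 1) (γ : ℝ)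
    (h : ℝ)
    (hc1 : ∀ y : EuclideanSpace ℝ (Fin d),
      Tendsto (fun t : ℝ => f (t • θ - y) / f (t • θ)) atTop
        (nhds (Real.exp (γ * ⟪θ, y⟫_ℝ))))
    (hexp : Integrable (fun y => Real.exp (γ * ⟪θ, y⟫_ℝ) * f y))
    (hh : (∫ y, Real.exp (γ * ⟪θ, y⟫_ℝ) * f y) = h)
    (hc2 : Tendsto (fun t : ℝ => (∫ y, f (t • θ - y) * f y) / f (t • θ)) atTop
      (nhds (2 * h))) :
    Tendsto (KA d A f) atTop (nhds 0) := by
  have hc0 : 0 < c := by linarith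
  have hpos : ∀ x, A ≤ ‖x‖ → 0 < f x := fun x hx =>
    (mul_pos (one_div_pos.2 hc0) (hgpos _ hx)).trans_le (hcomp x hx).1
  have hbdd : ∀ z, A ≤ ‖z‖ → f z ≤ c * g A := fun z hz =>
    (hcomp z hz).2.trans (mul_le_mul_of_nonneg_left (hgdec _ _ le_rfl hz) hc0.le)
  refine ENNReal.tendsto_nhds_zero.2 fun ε hε => ?_
  obtain ⟨ε', -, hε'0, hε'⟩ := ENNReal.lt_iff_exists_real_btwn.1 hε
  obtain ⟨r₀, T, hfar⟩ := exists_convTailRatio_le_of_far hfint hf0 hθ (pow_pos hc0 2) hpos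
    (fun z w hw hwz => le_sq_mul_of_norm_le hc0 hgdec hcomp hw hwz) hbdd hc1 hexp (hh ▸ hc2)
    (ENNReal.ofReal_pos.1 hε'0)
  have hnear := eventually_convTailRatio_le hfint hf0 (by have := hgpos A le_rfl; positivity)
    hbdd (div_pos (hgpos _ (le_max_right T A)) hc0) (ENNReal.ofReal_pos.1 hε'0)
  filter_upwards [hnear, eventually_ge_atTop r₀] with r hr hr₀
  refine iSup_le fun x => le_trans ?_ hε'.le
  rcases le_total ‖x.1‖ (max T A) with hxT | hxT
  · refine hr x ?_
    calc g (max T A) / c ≤ 1 / c * g ‖x.1‖ := by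
          rw [one_div_mul_eq_div]; gcongr; exact hgdec _ _ x.2 hxT
      _ ≤ f x := (hcomp x x.2).1
  · exact hfar x (le_of_max_le_left hxT) r hr₀

theorem stmt12 (d : ℕ) (f : EuclideanSpace ℝ (Fin d) → ℝ)
    (hfint : Integrable f) (hf0 : ∀ x, 0 ≤ f x)
    (A c : ℝ) (hA : 1 ≤ A) (hc : 1 ≤ c)
    (g : ℝ → ℝ) (hgpos : ∀ r : ℝ, A ≤ r → 0 < g r)
    (hgdec : ∀ s t : ℝ, A ≤ s → s ≤ t → g t ≤ g s)
    (hcomp : ∀ x : EuclideanSpace ℝ (Fin d), A ≤ ‖x‖ →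
      (1 / c) * g ‖x‖ ≤ f x ∧ f x ≤ c * g ‖x‖)
    (θ : EuclideanSpace ℝ (Fin d)) (hθ : ‖θ‖ = 1) (γ : ℝ) (hγ : 0 ≤ γ)
    (h : ℝ)
    (hc1 : ∀ y : EuclideanSpace ℝ (Fin d),
      Tendsto (fun t : ℝ => f (t • θ - y) / f (t • θ)) atTop
        (nhds (Real.exp (γ * ⟪θ, y⟫_ℝ))))
    (hexp : Integrable (fun y => Real.exp (γ * ⟪θ, y⟫_ℝ) * f y))
    (hh : (∫ y, Real.exp (γ * ⟪θ, y⟫_ℝ) * f y) = h)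
    (hc2 : Tendsto (fun t : ℝ => (∫ y, f (t • θ - y) * f y) / f (t • θ)) atTop
      (nhds (2 * h))) :
    Tendsto (KA d A f) atTop (nhds 0) :=
  stmt12_general d f hfint hf0 A c hc g hgpos hgdec hcomp θ hθ γ h hc1 hexp hh hc2
end

section
/- Let d ≥ 2, m > 0, β > (d+1)/2. Then ∫_{|y|>r, y₁>0} e^{m(y₁ − |y|)} |y|^{-β} dy ≤ C r^{(d+1)/2 − β} for all r > 1, where C depends only on d, m, β. -/
/-!
Split the domain along the cone `‖y‖ ≤ 2 y₁`. On the cone, writing `y = (t, x)` with `t = y₁`,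
one has `‖y‖ - t = ‖x‖² / (‖y‖ + t) ≥ ‖x‖² / (4t)` and `t > r/2`, so the integrand is at most
`t^{-β} exp(-m‖x‖²/(4t))`; integrating the Gaussian in `x ∈ ℝ^{d-1}` gives `C t^{(d-1)/2 - β}`,
and integrating over `t > r/2` gives `C r^{(d+1)/2 - β}`. Off the cone `y₁ - ‖y‖ ≤ -‖y‖/2`, so the
integrand is at most `r^{-β} exp(-m‖y‖/2)`, which is integrable, and `r^{-β} ≤ r^{(d+1)/2 - β}`.
-/

open MeasureTheory Real Set
open scoped ENNReal

/-- Integrability is not needed as a separate input: the Bochner integral is nonzero. -/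
lemma lintegral_exp_neg_mul_sq_norm {V : Type*} [NormedAddCommGroup V] [InnerProductSpace ℝ V]
    [FiniteDimensional ℝ V] [MeasurableSpace V] [BorelSpace V] {b : ℝ} (hb : 0 < b) :
    ∫⁻ v : V, ENNReal.ofReal (rexp (-b * ‖v‖ ^ 2)) =
      ENNReal.ofReal ((π / b) ^ (Module.finrank ℝ V / 2 : ℝ)) := by
  have hint := GaussianFourier.integral_rexp_neg_mul_sq_norm (V := V) hb
  rw [← hint, ofReal_integral_eq_lintegral_ofReal
    (.of_integral_ne_zero (by rw [hint]; positivity)) (ae_of_all _ fun _ => (exp_pos _).le)]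

lemma integrable_exp_neg_mul_norm {E : Type*} [NormedAddCommGroup E] [NormedSpace ℝ E]
    [FiniteDimensional ℝ E] [MeasurableSpace E] [BorelSpace E] (μ : Measure E)
    [μ.IsAddHaarMeasure] {b : ℝ} (hb : 0 < b) :
    Integrable (fun x : E => rexp (-b * ‖x‖)) μ := by
  obtain _ | _ := subsingleton_or_nontrivial E
  · exact .of_finite
  rw [integrable_fun_norm_addHaar μ (f := fun t => rexp (-b * t))]
  refine (integrableOn_rpow_mul_exp_neg_mul_rpow (s := Module.finrank ℝ E - 1) (p := 1)
    (by simp [Module.finrank_pos]) one_pos hb).congr_fun ?_ measurableSet_Ioi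
  intro t _
  simp [← Real.rpow_natCast, Nat.cast_sub Module.finrank_pos]

section
variable {n : ℕ}

noncomputable def euclideanInsertNth (i : Fin (n + 1)) :
    ℝ × EuclideanSpace ℝ (Fin n) ≃ᵐ EuclideanSpace ℝ (Fin (n + 1)) :=
  (MeasurableEquiv.prodCongr (MeasurableEquiv.refl ℝ)
      (MeasurableEquiv.toLp 2 (Fin n → ℝ)).symm).trans
    ((MeasurableEquiv.piFinSuccAbove (fun _ => ℝ) i).symm.trans (MeasurableEquiv.toLp 2 _))

lemma measurePreserving_euclideanInsertNth (i : Fin (n + 1)) :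
    MeasurePreserving (euclideanInsertNth i) :=
  (((MeasurePreserving.id volume).prod
    (EuclideanSpace.volume_preserving_symm_measurableEquiv_toLp _)).trans
    (volume_preserving_piFinSuccAbove (fun _ => ℝ) i).symm).trans
    (EuclideanSpace.volume_preserving_symm_measurableEquiv_toLp _).symm

@[simp]
lemma euclideanInsertNth_apply_same (i : Fin (n + 1)) (p : ℝ × EuclideanSpace ℝ (Fin n)) :
    euclideanInsertNth i p i = p.1 := by
  simp [euclideanInsertNth, MeasurableEquiv.piFinSuccAbove_symm_apply, Fin.insertNthEquiv]
  rfl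

@[simp]
lemma euclideanInsertNth_apply_succAbove (i : Fin (n + 1)) (p : ℝ × EuclideanSpace ℝ (Fin n))
    (j : Fin n) : euclideanInsertNth i p (i.succAbove j) = p.2 j := by
  simp [euclideanInsertNth, MeasurableEquiv.piFinSuccAbove_symm_apply, Fin.insertNthEquiv]
  rfl

lemma norm_euclideanInsertNth_sq (i : Fin (n + 1)) (p : ℝ × EuclideanSpace ℝ (Fin n)) :
    ‖euclideanInsertNth i p‖ ^ 2 = p.1 ^ 2 + ‖p.2‖ ^ 2 := by
  simp [EuclideanSpace.norm_sq_eq, Fin.sum_univ_succAbove _ i]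
end

lemma lintegral_Ioi_rpow_of_lt {a c : ℝ} (ha : a < -1) (hc : 0 < c) :
    ∫⁻ t in Ioi c, ENNReal.ofReal (t ^ a) = ENNReal.ofReal (-c ^ (a + 1) / (a + 1)) := by
  rw [← ofReal_integral_eq_lintegral_ofReal (integrableOn_Ioi_rpow_of_lt ha hc)
    ((ae_restrict_iff' measurableSet_Ioi).2
      (ae_of_all _ fun t ht => rpow_nonneg (hc.trans ht).le _)),
    integral_Ioi_rpow_of_lt ha hc]

/-- On the cone `R ≤ 2t` the defect `R - t = Q / (R + t)` is at least `Q / (4t)`, which turns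
the exponential weight into a Gaussian in the transverse variables. -/
lemma exp_mul_sub_mul_rpow_neg_le {m β t R Q : ℝ} (hm : 0 ≤ m) (hβ : 0 ≤ β) (ht : 0 < t)
    (hR0 : 0 ≤ R) (hR : R ≤ 2 * t) (hQ : 0 ≤ Q) (hRtQ : R ^ 2 = t ^ 2 + Q) :
    rexp (m * (t - R)) * R ^ (-β) ≤ t ^ (-β) * rexp (-(m / (4 * t)) * Q) := by
  have htR : t ≤ R := by nlinarith [mul_self_nonneg (R - t)]
  have hdefect : Q / (4 * t) ≤ R - t := by
    rw [div_le_iff₀ (by positivity)]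
    nlinarith
  rw [mul_comm]
  gcongr ?_ * rexp ?_
  · exact rpow_le_rpow_of_nonpos ht htR (neg_nonpos.2 hβ)
  · rw [neg_mul, div_mul_eq_mul_div, mul_div_assoc]
    nlinarith [mul_le_mul_of_nonneg_left hdefect hm]

lemma lintegral_cone_exp_mul_rpow_neg_le {n : ℕ} (i : Fin (n + 1)) {m β r : ℝ} (hm : 0 < m)
    (hβ : (n : ℝ) / 2 + 1 < β) (hr : 0 < r) :
    ∫⁻ y : EuclideanSpace ℝ (Fin (n + 1)) in {y | r < ‖y‖ ∧ ‖y‖ ≤ 2 * y i},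
        ENNReal.ofReal (rexp (m * (y i - ‖y‖)) * ‖y‖ ^ (-β)) ≤
      ENNReal.ofReal ((4 * π / m) ^ ((n : ℝ) / 2) * 2 ^ (β - n / 2 - 1) / (β - n / 2 - 1) *
        r ^ ((n : ℝ) / 2 + 1 - β)) := by
  set e := euclideanInsertNth (n := n) i
  set K := (4 * π / m) ^ ((n : ℝ) / 2)
  set F : ℝ × EuclideanSpace ℝ (Fin n) → ℝ≥0∞ :=
    fun p => ENNReal.ofReal (p.1 ^ (-β) * rexp (-(m / (4 * p.1)) * ‖p.2‖ ^ 2))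
  have hF : Measurable F := by fun_prop
  have hβ0 : 0 ≤ β := by linarith [(n.cast_nonneg : (0 : ℝ) ≤ n)]
  have hsub : e ⁻¹' {y | r < ‖y‖ ∧ ‖y‖ ≤ 2 * y i} ⊆ Ioi (r / 2) ×ˢ univ := by
    rintro p ⟨hrp, hcone⟩
    simp only [e, euclideanInsertNth_apply_same] at hcone
    exact ⟨by simp only [mem_Ioi]; linarith, mem_univ _⟩
  have hpt : ∀ p ∈ e ⁻¹' {y | r < ‖y‖ ∧ ‖y‖ ≤ 2 * y i},
      ENNReal.ofReal (rexp (m * (e p i - ‖e p‖)) * ‖e p‖ ^ (-β)) ≤ F p := by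
    rintro p ⟨hrp, hcone⟩
    simp only [e, euclideanInsertNth_apply_same] at hcone ⊢
    exact ENNReal.ofReal_le_ofReal <| exp_mul_sub_mul_rpow_neg_le hm.le hβ0
      (by linarith) (norm_nonneg _) hcone (sq_nonneg _) (norm_euclideanInsertNth_sq i p)
  have hslice :
      ∀ t ∈ Ioi (r / 2), ∫⁻ x, F (t, x) = ENNReal.ofReal (K * t ^ ((n : ℝ) / 2 - β)) := by
    intro t ht
    have ht0 : 0 < t := by simp only [mem_Ioi] at ht; linarith
    simp only [F, ENNReal.ofReal_mul (rpow_nonneg ht0.le _)]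
    rw [lintegral_const_mul _ (by fun_prop), lintegral_exp_neg_mul_sq_norm (by positivity),
      finrank_euclideanSpace_fin, ← ENNReal.ofReal_mul (rpow_nonneg ht0.le _)]
    congr 1
    rw [show π / (m / (4 * t)) = 4 * π / m * t by field_simp, mul_rpow (by positivity) ht0.le,
      sub_eq_add_neg, rpow_add ht0]
    ring
  calc _ = ∫⁻ p in e ⁻¹' {y | r < ‖y‖ ∧ ‖y‖ ≤ 2 * y i},
          ENNReal.ofReal (rexp (m * (e p i - ‖e p‖)) * ‖e p‖ ^ (-β)) :=
        ((measurePreserving_euclideanInsertNth i).setLIntegral_comp_preimage_emb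
          e.measurableEmbedding _ _).symm
    _ ≤ ∫⁻ p in Ioi (r / 2) ×ˢ univ, F p :=
        (setLIntegral_mono hF hpt).trans (lintegral_mono_set hsub)
    _ = ∫⁻ t in Ioi (r / 2), ∫⁻ x, F (t, x) := by
        rw [Measure.volume_eq_prod, ← Measure.prod_restrict, Measure.restrict_univ]
        exact lintegral_prod _ hF.aemeasurable
    _ = ENNReal.ofReal K * ∫⁻ t in Ioi (r / 2), ENNReal.ofReal (t ^ ((n : ℝ) / 2 - β)) := by
        rw [setLIntegral_congr_fun measurableSet_Ioi hslice,
          ← lintegral_const_mul _ (by fun_prop)]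
        simp only [ENNReal.ofReal_mul (by positivity : 0 ≤ K)]
    _ = ENNReal.ofReal
          (K * 2 ^ (β - n / 2 - 1) / (β - n / 2 - 1) * r ^ ((n : ℝ) / 2 + 1 - β)) := by
        rw [lintegral_Ioi_rpow_of_lt (by linarith) (by positivity),
          ← ENNReal.ofReal_mul (by positivity)]
        congr 1
        rw [div_rpow hr.le zero_le_two, show (n : ℝ) / 2 - β + 1 = -(β - n / 2 - 1) by ring,
          rpow_neg zero_le_two, show (n : ℝ) / 2 + 1 - β = -(β - n / 2 - 1) by ring]
        field_simp

lemma lintegral_off_cone_exp_mul_rpow_neg_le {n : ℕ} (i : Fin n) {m β r : ℝ} (hm : 0 < m)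
    (hβ : 0 ≤ β) (hr : 0 < r) :
    ∫⁻ y : EuclideanSpace ℝ (Fin n) in {y | r < ‖y‖ ∧ 2 * y i < ‖y‖},
        ENNReal.ofReal (rexp (m * (y i - ‖y‖)) * ‖y‖ ^ (-β)) ≤
      ENNReal.ofReal ((∫ y : EuclideanSpace ℝ (Fin n), rexp (-(m / 2) * ‖y‖)) * r ^ (-β)) := by
  have hpt : ∀ y ∈ {y : EuclideanSpace ℝ (Fin n) | r < ‖y‖ ∧ 2 * y i < ‖y‖},
      ENNReal.ofReal (rexp (m * (y i - ‖y‖)) * ‖y‖ ^ (-β)) ≤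
        ENNReal.ofReal (rexp (-(m / 2) * ‖y‖)) * ENNReal.ofReal (r ^ (-β)) := by
    rintro y ⟨hry, hcone⟩
    rw [← ENNReal.ofReal_mul (exp_pos _).le]
    gcongr ENNReal.ofReal (rexp ?_ * ?_)
    · nlinarith
    · exact rpow_le_rpow_of_nonpos hr hry.le (neg_nonpos.2 hβ)
  calc _ ≤ ∫⁻ y : EuclideanSpace ℝ (Fin n) in {y | r < ‖y‖ ∧ 2 * y i < ‖y‖},
          ENNReal.ofReal (rexp (-(m / 2) * ‖y‖)) * ENNReal.ofReal (r ^ (-β)) :=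
        setLIntegral_mono (by fun_prop) hpt
    _ ≤ ∫⁻ y : EuclideanSpace ℝ (Fin n),
          ENNReal.ofReal (rexp (-(m / 2) * ‖y‖)) * ENNReal.ofReal (r ^ (-β)) :=
        setLIntegral_le_lintegral _ _
    _ = ENNReal.ofReal ((∫ y : EuclideanSpace ℝ (Fin n), rexp (-(m / 2) * ‖y‖)) * r ^ (-β)) := by
        rw [lintegral_mul_const _ (by fun_prop), ← ofReal_integral_eq_lintegral_ofReal
          (integrable_exp_neg_mul_norm volume (half_pos hm)) (ae_of_all _ fun _ => (exp_pos _).le),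
          ENNReal.ofReal_mul (integral_nonneg fun _ => (exp_pos _).le)]

theorem lintegral_exp_mul_rpow_neg_le {n : ℕ} (i : Fin (n + 1)) {m β r : ℝ} (hm : 0 < m)
    (hβ : (n : ℝ) / 2 + 1 < β) (hr : 1 ≤ r) :
    ∫⁻ y : EuclideanSpace ℝ (Fin (n + 1)) in {y | r < ‖y‖},
        ENNReal.ofReal (rexp (m * (y i - ‖y‖)) * ‖y‖ ^ (-β)) ≤
      ENNReal.ofReal (((4 * π / m) ^ ((n : ℝ) / 2) * 2 ^ (β - n / 2 - 1) / (β - n / 2 - 1) +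
        ∫ y : EuclideanSpace ℝ (Fin (n + 1)), rexp (-(m / 2) * ‖y‖)) *
          r ^ ((n : ℝ) / 2 + 1 - β)) := by
  have hr0 : 0 < r := by linarith
  have hβ0 : 0 ≤ β := by linarith [(n.cast_nonneg : (0 : ℝ) ≤ n)]
  have hoff : 0 ≤ ∫ y : EuclideanSpace ℝ (Fin (n + 1)), rexp (-(m / 2) * ‖y‖) :=
    integral_nonneg fun _ => (exp_pos _).le
  have hcone : 0 ≤ (4 * π / m) ^ ((n : ℝ) / 2) * 2 ^ (β - n / 2 - 1) / (β - n / 2 - 1) :=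
    div_nonneg (by positivity) (by linarith)
  calc _ ≤ (∫⁻ y : EuclideanSpace ℝ (Fin (n + 1)) in {y | r < ‖y‖ ∧ ‖y‖ ≤ 2 * y i},
          ENNReal.ofReal (rexp (m * (y i - ‖y‖)) * ‖y‖ ^ (-β))) +
        ∫⁻ y : EuclideanSpace ℝ (Fin (n + 1)) in {y | r < ‖y‖ ∧ 2 * y i < ‖y‖},
          ENNReal.ofReal (rexp (m * (y i - ‖y‖)) * ‖y‖ ^ (-β)) := by
        refine (lintegral_mono_set fun y hy => ?_).trans (lintegral_union_le _ _ _)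
        exact (le_or_gt ‖y‖ (2 * y i)).imp (⟨hy, ·⟩) (⟨hy, ·⟩)
    _ ≤ _ + _ :=
        add_le_add (lintegral_cone_exp_mul_rpow_neg_le i hm hβ hr0)
          (lintegral_off_cone_exp_mul_rpow_neg_le i hm hβ0 hr0)
    _ ≤ _ := by
        rw [add_mul, ENNReal.ofReal_add (mul_nonneg hcone (by positivity)) (by positivity)]
        gcongr
        linarith [(n.cast_nonneg : (0 : ℝ) ≤ n)]

theorem stmt14 (d : ℕ) (hd : 2 ≤ d) (m β : ℝ) (hm : 0 < m)
    (hβ : ((d : ℝ) + 1) / 2 < β) :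
    ∃ C : ℝ, 0 < C ∧ ∀ r : ℝ, 1 < r →
      (∫⁻ y : EuclideanSpace ℝ (Fin d) in
          {y | r < ‖y‖ ∧ 0 < y ⟨0, by omega⟩},
        ENNReal.ofReal (Real.exp (m * (y ⟨0, by omega⟩ - ‖y‖)) * ‖y‖ ^ (-β))) ≤
      ENNReal.ofReal (C * r ^ (((d : ℝ) + 1) / 2 - β)) := by
  obtain ⟨n, rfl⟩ : ∃ n, d = n + 1 := ⟨d - 1, by omega⟩
  have hβ' : (n : ℝ) / 2 + 1 < β := by push_cast at hβ; linarith
  have hexponent : ((↑(n + 1) : ℝ) + 1) / 2 - β = n / 2 + 1 - β := by push_cast; ring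
  have hcone : 0 < (4 * π / m) ^ ((n : ℝ) / 2) * 2 ^ (β - n / 2 - 1) / (β - n / 2 - 1) :=
    div_pos (by positivity) (by linarith)
  have hoff : 0 ≤ ∫ y : EuclideanSpace ℝ (Fin (n + 1)), rexp (-(m / 2) * ‖y‖) :=
    integral_nonneg fun _ => (exp_pos _).le
  refine ⟨_, add_pos_of_pos_of_nonneg hcone hoff, fun r hr => ?_⟩
  rw [hexponent]
  exact (lintegral_mono_set fun y hy => hy.1).trans
    (lintegral_exp_mul_rpow_neg_le _ hm hβ' hr.le)
end

section
/- For the lower bound in the exponential profile example: let d ≥ 1, m > 0, β ≥ 0, g(s) = e^{-ms}(max(1,s))^{-β}, and x_n = (2n,0,...,0) with n > r > 1. Then ∫_{r < y₁ < n} g(|x_n − y|)g(|y|)/g(|x_n|) dy ≥ c ∫_r^n y₁^{(d-1)/2 − β} dy₁ for a constant c > 0 independent of n and r; consequently if β ≤ (d+1)/2 then sup_n of the left-hand side is infinite. -/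
/-!
Write `y = (t, z)` with `t = y₁` and `z ∈ ℝ^(d-1)`. On the tube where `r < t < n` and every
`|z_j| < √(t / d)` one has `|z|² ≤ t`, so `|y|` and `|x_n - y|` exceed `t` and `2n - t` by at most
`1/2`. Hence `|x_n - y| + |y| ≤ |x_n| + 1`, `|y| ≤ 2t`, `|x_n - y| ≤ |x_n|`, and the kernel
`g(|x_n - y|) g(|y|) / g(|x_n|)` is at least `e^{-m} (2t)^{-β}` there. The cross-section of the tube
has volume `(2√(t/d))^{d-1}`, which gives the lower bound `c ∫_r^n t^{(d-1)/2 - β} dt`. When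
`β ≤ (d+1)/2` the exponent is at least `-1`, so this integral dominates `log (n / r) → ∞`.
-/

open Filter MeasureTheory Set Topology
open scoped ENNReal

noncomputable def expProfile (m β s : ℝ) : ℝ := Real.exp (-m * s) * max 1 s ^ (-β)

noncomputable def expProfileRatio {E : Type*} [NormedAddCommGroup E] (m β : ℝ) (x y : E) : ℝ :=
  expProfile m β ‖x - y‖ * expProfile m β ‖y‖ / expProfile m β ‖x‖

def boxTube (k : ℕ) (s : Set ℝ) (a : ℝ → ℝ) : Set (EuclideanSpace ℝ (Fin (k + 1))) :=
  {y | y 0 ∈ s ∧ ∀ j : Fin k, |y j.succ| < a (y 0)}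

lemma setLIntegral_comp_fst_prod {α β : Type*} [MeasurableSpace α] [MeasurableSpace β]
    (μ : Measure α) (ν : Measure β) [SFinite ν] {S : Set (α × β)} (hS : MeasurableSet S)
    {f : α → ℝ≥0∞} (hf : Measurable f) :
    ∫⁻ p in S, f p.1 ∂μ.prod ν = ∫⁻ x, f x * ν (Prod.mk x ⁻¹' S) ∂μ := by
  rw [← withDensity_apply _ hS, ← prod_withDensity_left hf, Measure.prod_apply hS,
    lintegral_withDensity_eq_lintegral_mul _ hf (measurable_measure_prodMk_left hS)]
  rfl

lemma measurableSet_boxTube (k : ℕ) {s : Set ℝ} (hs : MeasurableSet s) {a : ℝ → ℝ}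
    (ha : Measurable a) : MeasurableSet (boxTube k s a) := by
  simp only [boxTube, ofPred_and, ofPred_forall]
  exact (hs.preimage (by fun_prop)).inter
    (.iInter fun j => measurableSet_lt (by fun_prop) (ha.comp (by fun_prop)))

lemma lintegral_boxTube (k : ℕ) {s : Set ℝ} (hs : MeasurableSet s) {a : ℝ → ℝ}
    (ha : Measurable a) {f : ℝ → ℝ≥0∞} (hf : Measurable f) :
    ∫⁻ y in boxTube k s a, f (y 0) = ∫⁻ t in s, f t * ENNReal.ofReal (2 * a t) ^ k := by
  let ψ := (MeasurableEquiv.toLp 2 (Fin (k + 1) → ℝ)).symm.trans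
    (MeasurableEquiv.piFinSuccAbove (fun _ : Fin (k + 1) => ℝ) 0)
  have hψ : MeasurePreserving ψ :=
    (EuclideanSpace.volume_preserving_symm_measurableEquiv_toLp _).trans
      (volume_preserving_piFinSuccAbove (fun _ : Fin (k + 1) => ℝ) 0)
  let S : Set (ℝ × (Fin k → ℝ)) := {p | p.1 ∈ s ∧ ∀ j, |p.2 j| < a p.1}
  have hS : MeasurableSet S := by
    simp only [S, ofPred_and, ofPred_forall]
    exact (hs.preimage measurable_fst).inter
      (.iInter fun j => measurableSet_lt (by fun_prop) (ha.comp measurable_fst))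
  have hslice (t : ℝ) :
      volume (Prod.mk t ⁻¹' S) = s.indicator (fun t => ENNReal.ofReal (2 * a t) ^ k) t := by
    by_cases ht : t ∈ s
    · have hbox : Prod.mk t ⁻¹' S = univ.pi fun _ => Ioo (-a t) (a t) := by
        ext z; simp [S, ht, abs_lt]
      rw [hbox, volume_pi_pi]
      simp [ht, two_mul]
    · have hempty : Prod.mk t ⁻¹' S = ∅ := by
        ext z; simp [S, ht]
      simp [hempty, ht]
  calc ∫⁻ y in boxTube k s a, f (y 0) = ∫⁻ y in ψ ⁻¹' S, f (ψ y).1 := rfl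
    _ = ∫⁻ p in S, f p.1 :=
      hψ.setLIntegral_comp_preimage_emb ψ.measurableEmbedding (fun p => f p.1) S
    _ = ∫⁻ t, s.indicator (fun t => f t * ENNReal.ofReal (2 * a t) ^ k) t := by
      simp_rw [Measure.volume_eq_prod, setLIntegral_comp_fst_prod _ _ hS hf, hslice,
        indicator_mul_right]
    _ = _ := lintegral_indicator hs _

lemma norm_smul_single_zero_sub_sq {k : ℕ} (a : ℝ) (y : EuclideanSpace ℝ (Fin (k + 1))) :
    ‖a • EuclideanSpace.single 0 1 - y‖ ^ 2 = (a - y 0) ^ 2 + ∑ j : Fin k, y j.succ ^ 2 := by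
  rw [EuclideanSpace.norm_sq_eq, Fin.sum_univ_succ]
  simp [Fin.succ_ne_zero, sq_abs]

lemma mem_Icc_add_half_of_sq_eq_sq_add {x b s : ℝ} (hx : 0 ≤ x) (hs₀ : 0 ≤ s)
    (hs : s ≤ b) (h : x ^ 2 = b ^ 2 + s) : x ∈ Icc b (b + 1 / 2) :=
  ⟨by nlinarith, by nlinarith⟩

lemma sum_sq_le_of_abs_lt_sqrt {k : ℕ} {t : ℝ} (ht : 0 ≤ t) {z : Fin k → ℝ}
    (hz : ∀ j, |z j| < √(t / (k + 1))) : ∑ j, z j ^ 2 ≤ t :=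
  calc ∑ j, z j ^ 2 ≤ ∑ _j : Fin k, t / (k + 1) := Finset.sum_le_sum fun j _ => by
        simpa only [sq_abs] using ((Real.lt_sqrt (abs_nonneg _)).1 (hz j)).le
    _ = k / (k + 1) * t := by
      rw [Finset.sum_const, Finset.card_univ, Fintype.card_fin, nsmul_eq_mul]; ring
    _ ≤ t := mul_le_of_le_one_left ht
      ((div_le_one (by positivity : (0 : ℝ) < k + 1)).2 (by linarith))

lemma exp_neg_mul_rpow_le_expProfile_mul_div {m β t u v w : ℝ} (hm : 0 ≤ m) (hβ : 0 ≤ β)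
    (hu : 1 ≤ u) (hv : 1 ≤ v) (huw : u ≤ w) (hvt : v ≤ 2 * t)
    (huvw : u + v ≤ w + 1) :
    Real.exp (-m) * (2 * t) ^ (-β) ≤ expProfile m β u * expProfile m β v / expProfile m β w := by
  have ht : 0 < t := by linarith
  have hw : 0 < w := by linarith
  unfold expProfile
  rw [max_eq_right hu, max_eq_right hv, max_eq_right (hu.trans huw), le_div_iff₀ (by positivity)]
  have hexp : Real.exp (-m) * Real.exp (-m * w) ≤ Real.exp (-m * u) * Real.exp (-m * v) := by
    rw [← Real.exp_add, ← Real.exp_add, Real.exp_le_exp]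
    nlinarith
  have hv' : (2 * t) ^ (-β) ≤ v ^ (-β) :=
    Real.rpow_le_rpow_of_nonpos (by linarith) hvt (neg_nonpos.2 hβ)
  have hu' : w ^ (-β) ≤ u ^ (-β) :=
    Real.rpow_le_rpow_of_nonpos (by linarith) huw (neg_nonpos.2 hβ)
  calc Real.exp (-m) * (2 * t) ^ (-β) * (Real.exp (-m * w) * w ^ (-β))
      = (Real.exp (-m) * Real.exp (-m * w)) * ((2 * t) ^ (-β) * w ^ (-β)) := by ring
    _ ≤ (Real.exp (-m * u) * Real.exp (-m * v)) * (v ^ (-β) * u ^ (-β)) :=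
      mul_le_mul hexp (mul_le_mul hv' hu' (by positivity) (by positivity)) (by positivity)
        (by positivity)
    _ = Real.exp (-m * u) * u ^ (-β) * (Real.exp (-m * v) * v ^ (-β)) := by ring

lemma exp_neg_mul_rpow_le_expProfileRatio_of_mem_boxTube {k : ℕ} {m β r n : ℝ} (hm : 0 ≤ m)
    (hβ : 0 ≤ β) (hr : 1 ≤ r) {y : EuclideanSpace ℝ (Fin (k + 1))}
    (hy : y ∈ boxTube k (Ioo r n) fun t => √(t / (k + 1))) :
    Real.exp (-m) * (2 * y 0) ^ (-β) ≤
      expProfileRatio m β ((2 * n) • EuclideanSpace.single (0 : Fin (k + 1)) (1 : ℝ)) y := by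
  obtain ⟨⟨hrt, htn⟩, hbox⟩ : (r < y 0 ∧ y 0 < n) ∧ _ := hy
  have hs : ∑ j : Fin k, y j.succ ^ 2 ≤ y 0 := sum_sq_le_of_abs_lt_sqrt (by linarith) hbox
  have hs₀ : 0 ≤ ∑ j : Fin k, y j.succ ^ 2 := by positivity
  obtain ⟨hv₁, hv₂⟩ := mem_Icc_add_half_of_sq_eq_sq_add (norm_nonneg y) hs₀ hs
    (by simpa using norm_smul_single_zero_sub_sq 0 y)
  obtain ⟨hu₁, hu₂⟩ := mem_Icc_add_half_of_sq_eq_sq_add (norm_nonneg _) hs₀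
    (by linarith) (norm_smul_single_zero_sub_sq (2 * n) y)
  have hx : ‖(2 * n) • EuclideanSpace.single (0 : Fin (k + 1)) (1 : ℝ)‖ = 2 * n := by
    simp [norm_smul, abs_of_pos (by linarith : 0 < n)]
  rw [expProfileRatio, hx]
  exact exp_neg_mul_rpow_le_expProfile_mul_div hm hβ (by linarith) (by linarith) (by linarith)
    (by linarith) (by linarith)

lemma rpow_neg_mul_two_sqrt_div_pow (k : ℕ) (β : ℝ) {t : ℝ} (ht : 0 < t) :
    (2 * t) ^ (-β) * (2 * √(t / (k + 1))) ^ k =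
      2 ^ (-β) * (2 / √(k + 1)) ^ k * t ^ ((k : ℝ) / 2 - β) := by
  rw [Real.mul_rpow zero_le_two ht.le, Real.sqrt_div ht.le, sub_eq_add_neg,
    Real.rpow_add ht, div_eq_inv_mul (k : ℝ), Real.rpow_mul ht.le, Real.rpow_natCast, ← one_div,
    ← Real.sqrt_eq_rpow]
  ring

lemma integrableOn_Ioo_rpow {r : ℝ} (hr : 0 < r) (n p : ℝ) :
    IntegrableOn (fun s : ℝ => s ^ p) (Ioo r n) :=
  (continuousOn_id.rpow_const fun _ hs => Or.inl (hr.trans_le hs.1).ne').integrableOn_Icc.mono_set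
    Ioo_subset_Icc_self

theorem exists_ofReal_integral_rpow_le_lintegral_expProfileRatio (k : ℕ) {m β : ℝ}
    (hm : 0 ≤ m) (hβ : 0 ≤ β) :
    ∃ c : ℝ, 0 < c ∧ ∀ r n : ℝ, 1 < r → r < n →
      ENNReal.ofReal (c * ∫ s in Ioo r n, s ^ ((k : ℝ) / 2 - β)) ≤
        ∫⁻ y : EuclideanSpace ℝ (Fin (k + 1)) in {y | r < y 0 ∧ y 0 < n}, ENNReal.ofReal
          (expProfileRatio m β ((2 * n) • EuclideanSpace.single (0 : Fin (k + 1)) (1 : ℝ)) y) := by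
  have ha : Measurable fun t : ℝ => √(t / (k + 1)) := by fun_prop
  refine ⟨Real.exp (-m) * (2 ^ (-β) * (2 / √(k + 1)) ^ k), by positivity, fun r n hr hrn => ?_⟩
  have hr₀ : 0 < r := by linarith
  calc ENNReal.ofReal (Real.exp (-m) * (2 ^ (-β) * (2 / √(k + 1)) ^ k) *
          ∫ s in Ioo r n, s ^ ((k : ℝ) / 2 - β))
      = ∫⁻ t in Ioo r n, ENNReal.ofReal (Real.exp (-m) * (2 * t) ^ (-β)) *
          ENNReal.ofReal (2 * √(t / (k + 1))) ^ k := by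
        rw [← integral_const_mul, ofReal_integral_eq_lintegral_ofReal
          ((integrableOn_Ioo_rpow hr₀ n _).const_mul _)
          ((ae_restrict_mem measurableSet_Ioo).mono fun t ht => by
            have : 0 < t := hr₀.trans ht.1
            positivity)]
        refine setLIntegral_congr_fun measurableSet_Ioo fun t ht => ?_
        have ht₀ : 0 < t := hr₀.trans ht.1
        rw [← ENNReal.ofReal_pow (by positivity), ← ENNReal.ofReal_mul (by positivity),
          mul_assoc (Real.exp (-m)) ((2 * t) ^ (-β)), rpow_neg_mul_two_sqrt_div_pow k β ht₀,
          mul_assoc]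
    _ = ∫⁻ y in boxTube k (Ioo r n) fun t => √(t / (k + 1)),
          ENNReal.ofReal (Real.exp (-m) * (2 * y 0) ^ (-β)) :=
        (lintegral_boxTube k measurableSet_Ioo ha (by fun_prop)).symm
    _ ≤ ∫⁻ y in boxTube k (Ioo r n) fun t => √(t / (k + 1)), ENNReal.ofReal
          (expProfileRatio m β ((2 * n) • EuclideanSpace.single (0 : Fin (k + 1)) (1 : ℝ)) y) :=
        lintegral_mono_ae <| ae_restrict_of_forall_mem
          (measurableSet_boxTube k measurableSet_Ioo ha) fun y hy => ENNReal.ofReal_le_ofReal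
            (exp_neg_mul_rpow_le_expProfileRatio_of_mem_boxTube hm hβ hr.le hy)
    _ ≤ _ := lintegral_mono_set fun y hy => hy.1

lemma tendsto_integral_Ioo_rpow_atTop {r p : ℝ} (hr : 1 ≤ r) (hp : -1 ≤ p) :
    Tendsto (fun n => ∫ s in Ioo r n, s ^ p) atTop atTop := by
  have hr₀ : 0 < r := by linarith
  refine tendsto_atTop_mono' _ ?_
    (tendsto_atTop_add_const_right _ (-Real.log r) Real.tendsto_log_atTop)
  filter_upwards [eventually_ge_atTop r] with n hn
  calc Real.log n + -Real.log r = ∫ s in Ioo r n, s ^ (-1 : ℝ) := by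
        simp only [Real.rpow_neg_one]
        rw [← integral_Ioc_eq_integral_Ioo, ← intervalIntegral.integral_of_le hn,
          integral_inv_of_pos hr₀ (hr₀.trans_le hn), Real.log_div (by linarith) hr₀.ne',
          sub_eq_add_neg]
    _ ≤ ∫ s in Ioo r n, s ^ p :=
        setIntegral_mono_on (integrableOn_Ioo_rpow hr₀ n _) (integrableOn_Ioo_rpow hr₀ n _)
          measurableSet_Ioo fun s hs => Real.rpow_le_rpow_of_exponent_le (hr.trans hs.1.le) hp

lemma iSup_subtype_lt_eq_top_of_tendsto {r : ℝ} {F G : ℝ → ℝ≥0∞} (hG : Tendsto G atTop (𝓝 ⊤))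
    (hGF : ∀ n, r < n → G n ≤ F n) : ⨆ n : {n : ℝ // r < n}, F n = ⊤ := by
  rw [iSup_eq_top]
  intro b hb
  obtain ⟨n, hbn, hrn⟩ := ((hG.eventually (lt_mem_nhds hb)).and (eventually_gt_atTop r)).exists
  exact ⟨⟨n, hrn⟩, hbn.trans_le (hGF n hrn)⟩

theorem stmt16 (d : ℕ) (hd : 1 ≤ d) (m β : ℝ) (hm : 0 < m) (hβ : 0 ≤ β)
    (g : ℝ → ℝ) (hg : ∀ s : ℝ, g s = Real.exp (-m * s) * (max 1 s) ^ (-β)) :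
    (∃ c : ℝ, 0 < c ∧ ∀ r n : ℝ, 1 < r → r < n →
      ENNReal.ofReal (c * ∫ s in Set.Ioo r n, s ^ (((d : ℝ) - 1) / 2 - β)) ≤
        ∫⁻ y : EuclideanSpace ℝ (Fin d) in
            {y | r < y ⟨0, by omega⟩ ∧ y ⟨0, by omega⟩ < n},
          ENNReal.ofReal
            (g ‖(2 * n) • EuclideanSpace.single (⟨0, by omega⟩ : Fin d) (1 : ℝ) - y‖ *
              g ‖y‖ /
              g ‖(2 * n) • EuclideanSpace.single (⟨0, by omega⟩ : Fin d) (1 : ℝ)‖)) ∧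
    (β ≤ ((d : ℝ) + 1) / 2 → ∀ r : ℝ, 1 < r →
      (⨆ n : {n : ℝ // r < n},
        ∫⁻ y : EuclideanSpace ℝ (Fin d) in
            {y | r < y ⟨0, by omega⟩ ∧ y ⟨0, by omega⟩ < (n : ℝ)},
          ENNReal.ofReal
            (g ‖(2 * (n : ℝ)) • EuclideanSpace.single (⟨0, by omega⟩ : Fin d) (1 : ℝ) - y‖ *
              g ‖y‖ /
              g ‖(2 * (n : ℝ)) • EuclideanSpace.single (⟨0, by omega⟩ : Fin d) (1 : ℝ)‖)) = ⊤) := by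
  obtain ⟨k, rfl⟩ : ∃ k, d = k + 1 := ⟨d - 1, by omega⟩
  obtain rfl : g = expProfile m β := funext hg
  obtain ⟨c, hc, hbound⟩ := exists_ofReal_integral_rpow_le_lintegral_expProfileRatio k hm.le hβ
  have hp : (((k + 1 : ℕ) : ℝ) - 1) / 2 - β = (k : ℝ) / 2 - β := by push_cast; ring
  simp only [Fin.mk_zero, hp]
  refine ⟨⟨c, hc, hbound⟩, fun hβd r hr =>
    iSup_subtype_lt_eq_top_of_tendsto ?_ fun n hrn => hbound r n hr hrn⟩
  have hp₁ : -1 ≤ (k : ℝ) / 2 - β := by push_cast at hβd; linarith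
  exact ENNReal.tendsto_ofReal_atTop.comp
    ((tendsto_integral_Ioo_rpow_atTop hr.le hp₁).const_mul_atTop hc)
end
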